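/- arXiv:1707.01882 — 7 statements merged into one kernel-verified Lean document; each statement's English description precedes it below -/
import Mathlib

section
/- If a smooth flow map x(a,t) with ∂ₜx = u(x,t) satisfies x(a,0) = a, and the Eulerian density ρ(x,t) > 0 satisfies the continuity equation ∂ₜρ + ∇·(ρu) = 0, then for all a, t: ρ(x(a,t),t) · det(Dₐx(a,t)) = ρ(a,0). In particular det(Dₐx) = ρ₀/ρ. -/
noncomputable section

private lemma clm_pi3 {F : Type*} [NormedAddCommGroup F] [NormedSpace ℝ F]
    (L : (Fin 3 → ℝ) →L[ℝ] F) (v : Fin 3 → ℝ) :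
    L v = ∑ k, v k • L (Pi.single k 1) := by
  have hv : v = ∑ k : Fin 3, v k • (Pi.single k 1 : Fin 3 → ℝ) := by
    funext i
    simp [Finset.sum_apply, Pi.single_apply]
  calc L v = L (∑ k : Fin 3, v k • (Pi.single k 1 : Fin 3 → ℝ)) := by rw [← hv]
    _ = ∑ k, v k • L (Pi.single k 1) := by rw [map_sum]; simp

private lemma hasFDerivAt_slice_fst {F : Type*} [NormedAddCommGroup F] [NormedSpace ℝ F]
    {f : ((Fin 3 → ℝ) × ℝ) → F} (hf : Differentiable ℝ f) (a : Fin 3 → ℝ) (t : ℝ) :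
    HasFDerivAt (fun b => f (b, t))
      ((fderiv ℝ f (a, t)).comp (ContinuousLinearMap.inl ℝ (Fin 3 → ℝ) ℝ)) a :=
  (hf (a, t)).hasFDerivAt.comp a (hasFDerivAt_prodMk_left a t)

private lemma fderiv_slice_fst {F : Type*} [NormedAddCommGroup F] [NormedSpace ℝ F]
    {f : ((Fin 3 → ℝ) × ℝ) → F} (hf : Differentiable ℝ f) (a : Fin 3 → ℝ) (t : ℝ)
    (v : Fin 3 → ℝ) :
    fderiv ℝ (fun b => f (b, t)) a v = fderiv ℝ f (a, t) (v, 0) := by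
  rw [(hasFDerivAt_slice_fst hf a t).fderiv]; rfl

private lemma diff_slice_fst {F : Type*} [NormedAddCommGroup F] [NormedSpace ℝ F]
    {f : ((Fin 3 → ℝ) × ℝ) → F} (hf : Differentiable ℝ f) (t : ℝ) :
    Differentiable ℝ (fun b => f (b, t)) := fun a =>
  (hasFDerivAt_slice_fst hf a t).differentiableAt

private lemma hasDerivAt_slice_snd {F : Type*} [NormedAddCommGroup F] [NormedSpace ℝ F]
    {f : ((Fin 3 → ℝ) × ℝ) → F} (hf : Differentiable ℝ f) (a : Fin 3 → ℝ) (t : ℝ) :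
    HasDerivAt (fun τ => f (a, τ)) (fderiv ℝ f (a, t) (0, 1)) t := by
  have h1 : HasDerivAt (fun τ : ℝ => ((a, τ) : (Fin 3 → ℝ) × ℝ)) (0, 1) t :=
    (hasDerivAt_const t a).prodMk (hasDerivAt_id t)
  exact (hf (a, t)).hasFDerivAt.comp_hasDerivAt t h1

private lemma clm_apply_pair {F : Type*} [NormedAddCommGroup F] [NormedSpace ℝ F]
    (L : ((Fin 3 → ℝ) × ℝ) →L[ℝ] F) (v : Fin 3 → ℝ) :
    L (v, 0) = ∑ k, v k • L (Pi.single k 1, 0) := by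
  have h := clm_pi3 (L.comp (ContinuousLinearMap.inl ℝ (Fin 3 → ℝ) ℝ)) v
  simpa using h

private lemma fderiv_comp_proj {G : Type*} [NormedAddCommGroup G] [NormedSpace ℝ G]
    {F : G → (Fin 3 → ℝ)} (hF : Differentiable ℝ F) (q : G) (i : Fin 3) (v : G) :
    fderiv ℝ (fun p => F p i) q v = fderiv ℝ F q v i := by
  have h : HasFDerivAt (fun p => F p i)
      ((ContinuousLinearMap.proj i).comp (fderiv ℝ F q)) q :=
    (ContinuousLinearMap.proj i : (Fin 3 → ℝ) →L[ℝ] ℝ).hasFDerivAt.comp q (hF q).hasFDerivAt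
  rw [h.fderiv]; rfl

private lemma hasDerivAt_mass (r : ℝ → ℝ) (Jf : Fin 3 → Fin 3 → ℝ → ℝ)
    (A : Fin 3 → Fin 3 → ℝ) (s : ℝ)
    (hr : HasDerivAt r (-((A 0 0 + A 1 1 + A 2 2) * r s)) s)
    (hJ : ∀ i j, HasDerivAt (Jf i j)
      (A i 0 * Jf 0 j s + A i 1 * Jf 1 j s + A i 2 * Jf 2 j s) s) :
    HasDerivAt (fun τ => r τ * (Matrix.of fun i j => Jf i j τ).det) 0 s := by
  simp only [Matrix.det_fin_three, Matrix.of_apply]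
  have hdet := (((((((hJ 0 0).mul (hJ 1 1)).mul (hJ 2 2)).sub
      (((hJ 0 0).mul (hJ 1 2)).mul (hJ 2 1))).sub
      (((hJ 0 1).mul (hJ 1 0)).mul (hJ 2 2))).add
      (((hJ 0 1).mul (hJ 1 2)).mul (hJ 2 0))).add
      (((hJ 0 2).mul (hJ 1 0)).mul (hJ 2 1))).sub
      (((hJ 0 2).mul (hJ 1 1)).mul (hJ 2 0))
  have h := hr.mul hdet
  refine h.congr_deriv ?_; symm
  simp only [Pi.mul_apply, Pi.sub_apply, Pi.add_apply]
  ring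



/-- Hankel's mass-conservation relation [2.9]:
`ρ(x(a,t),t) · det(Dₐx(a,t)) = ρ(a,0)`, i.e. `det(Dₐx) = ρ₀/ρ`. -/
theorem mass_conservation_jacobian
    (x u : (Fin 3 → ℝ) → ℝ → (Fin 3 → ℝ))
    (ρ : (Fin 3 → ℝ) → ℝ → ℝ)
    (hx : ContDiff ℝ (⊤ : ℕ∞) (Function.uncurry x))
    (hu : ContDiff ℝ (⊤ : ℕ∞) (Function.uncurry u))
    (hρ : ContDiff ℝ (⊤ : ℕ∞) (Function.uncurry ρ))
    (hρpos : ∀ y t, 0 < ρ y t)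
    (hflow : ∀ a t, deriv (fun τ => x a τ) t = u (x a t) t)
    (hinit : ∀ a, x a 0 = a)
    (hcont : ∀ y t,
      deriv (fun τ => ρ y τ) t
        + ∑ i, fderiv ℝ (fun z => ρ z t * u z t i) y (Pi.single i 1) = 0) :
    ∀ a t,
      ρ (x a t) t *
        (Matrix.of fun i j =>
          fderiv ℝ (fun b => x b t i) a (Pi.single j 1)).det = ρ a 0
      ∧ (Matrix.of fun i j =>
          fderiv ℝ (fun b => x b t i) a (Pi.single j 1)).det
          = ρ a 0 / ρ (x a t) t := by
  have hXdiff : Differentiable ℝ (Function.uncurry x) := hx.differentiable (by simp)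
  have hRdiff : Differentiable ℝ (Function.uncurry ρ) := hρ.differentiable (by simp)
  have hgc : ∀ i : Fin 3, ContDiff ℝ (⊤ : ℕ∞) (fun p : (Fin 3 → ℝ) × ℝ => x p.1 p.2 i) :=
    fun i => (ContinuousLinearMap.proj i : (Fin 3 → ℝ) →L[ℝ] ℝ).contDiff.comp hx
  have hud : ∀ i : Fin 3, Differentiable ℝ (fun q : (Fin 3 → ℝ) × ℝ => u q.1 q.2 i) :=
    fun i => ((ContinuousLinearMap.proj i : (Fin 3 → ℝ) →L[ℝ] ℝ).contDiff.comp
      hu).differentiable (by simp)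
  have hflow' : ∀ (b : Fin 3 → ℝ) (τ : ℝ),
      HasDerivAt (fun σ => x b σ) (u (x b τ) τ) τ := by
    intro b τ
    have h1 : HasDerivAt (fun σ => x b σ)
        (fderiv ℝ (Function.uncurry x) (b, τ) (0, 1)) τ :=
      hasDerivAt_slice_snd hXdiff b τ
    rw [← hflow b τ]
    exact h1.differentiableAt.hasDerivAt
  intro a t
  -- step 1: time derivative of the Jacobian entries
  have key1 : ∀ (i j : Fin 3) (s : ℝ),
      HasDerivAt (fun τ => fderiv ℝ (fun b => x b τ i) a (Pi.single j 1))
        (∑ k, fderiv ℝ (fun z => u z s i) (x a s) (Pi.single k 1)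
            * fderiv ℝ (fun b => x b s k) a (Pi.single j 1)) s := by
    intro i j s
    have hgci := hgc i
    have hgdi : Differentiable ℝ (fun p : (Fin 3 → ℝ) × ℝ => x p.1 p.2 i) :=
      hgci.differentiable (by simp)
    have hfun : (fun τ => fderiv ℝ (fun b => x b τ i) a (Pi.single j 1))
        = fun τ => fderiv ℝ (fun p : (Fin 3 → ℝ) × ℝ => x p.1 p.2 i) (a, τ)
            (Pi.single j 1, 0) := by
      funext τ; exact fderiv_slice_fst hgdi a τ _
    rw [hfun]
    have hGd : Differentiable ℝ (fderiv ℝ (fun p : (Fin 3 → ℝ) × ℝ => x p.1 p.2 i)) :=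
      (hgci.fderiv_right (m := 1) (WithTop.coe_le_coe.mpr le_top)).differentiable (by simp)
    have h1 : HasDerivAt (fun τ => fderiv ℝ (fun p : (Fin 3 → ℝ) × ℝ => x p.1 p.2 i) (a, τ))
        (fderiv ℝ (fderiv ℝ (fun p : (Fin 3 → ℝ) × ℝ => x p.1 p.2 i)) (a, s) (0, 1)) s :=
      hasDerivAt_slice_snd hGd a s
    have h2 := h1.clm_apply (hasDerivAt_const s ((Pi.single j 1, 0) : (Fin 3 → ℝ) × ℝ))
    simp only [map_zero, add_zero] at h2
    refine h2.congr_deriv ?_; symm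
    rw [(hgci.contDiffAt.isSymmSndFDerivAt (by rw [minSmoothness_of_isRCLikeNormedField]; exact WithTop.coe_le_coe.mpr le_top)).eq (0, 1) (Pi.single j 1, 0)]
    have h3 : fderiv ℝ (fun p : (Fin 3 → ℝ) × ℝ =>
          fderiv ℝ (fun q : (Fin 3 → ℝ) × ℝ => x q.1 q.2 i) p (0, 1)) (a, s)
        = (fderiv ℝ (fderiv ℝ (fun q : (Fin 3 → ℝ) × ℝ => x q.1 q.2 i)) (a, s)).flip
            ((0 : Fin 3 → ℝ), (1 : ℝ)) := by
      rw [fderiv_clm_apply (hGd (a, s)) (differentiableAt_const _)]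
      simp
    have h4 : fderiv ℝ (fderiv ℝ (fun q : (Fin 3 → ℝ) × ℝ => x q.1 q.2 i)) (a, s)
          (Pi.single j 1, 0) (0, 1)
        = fderiv ℝ (fun p : (Fin 3 → ℝ) × ℝ =>
            fderiv ℝ (fun q : (Fin 3 → ℝ) × ℝ => x q.1 q.2 i) p (0, 1)) (a, s)
            (Pi.single j 1, 0) := by
      rw [h3]; rfl
    rw [h4]
    have hvel : (fun p : (Fin 3 → ℝ) × ℝ =>
          fderiv ℝ (fun q : (Fin 3 → ℝ) × ℝ => x q.1 q.2 i) p (0, 1))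
        = fun p : (Fin 3 → ℝ) × ℝ => u (x p.1 p.2) p.2 i := by
      funext p
      have hb : HasDerivAt (fun σ => x p.1 σ i) (u (x p.1 p.2) p.2 i) p.2 :=
        (ContinuousLinearMap.proj i : (Fin 3 → ℝ) →L[ℝ] ℝ).hasFDerivAt.comp_hasDerivAt
          p.2 (hflow' p.1 p.2)
      exact (hasDerivAt_slice_snd hgdi p.1 p.2).unique hb
    rw [hvel]
    have hin : HasFDerivAt (fun p : (Fin 3 → ℝ) × ℝ => ((Function.uncurry x p, p.2) :
          (Fin 3 → ℝ) × ℝ))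
        ((fderiv ℝ (Function.uncurry x) (a, s)).prod
          (ContinuousLinearMap.snd ℝ (Fin 3 → ℝ) ℝ)) (a, s) :=
      (hXdiff (a, s)).hasFDerivAt.prodMk hasFDerivAt_snd
    have hout : HasFDerivAt (fun q : (Fin 3 → ℝ) × ℝ => u q.1 q.2 i)
        (fderiv ℝ (fun q : (Fin 3 → ℝ) × ℝ => u q.1 q.2 i) (x a s, s)) (x a s, s) :=
      (hud i (x a s, s)).hasFDerivAt
    have hcomp : HasFDerivAt (fun p : (Fin 3 → ℝ) × ℝ => u (x p.1 p.2) p.2 i)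
        ((fderiv ℝ (fun q : (Fin 3 → ℝ) × ℝ => u q.1 q.2 i) (x a s, s)).comp
          ((fderiv ℝ (Function.uncurry x) (a, s)).prod
            (ContinuousLinearMap.snd ℝ (Fin 3 → ℝ) ℝ))) (a, s) :=
      hout.comp (g := fun q : (Fin 3 → ℝ) × ℝ => u q.1 q.2 i) (a, s) hin
    rw [hcomp.fderiv]
    have hKval : ((fderiv ℝ (Function.uncurry x) (a, s)).prod
          (ContinuousLinearMap.snd ℝ (Fin 3 → ℝ) ℝ)) (Pi.single j 1, 0)
        = (fderiv ℝ (Function.uncurry x) (a, s) (Pi.single j 1, 0), (0 : ℝ)) := rfl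
    rw [ContinuousLinearMap.comp_apply, hKval, clm_apply_pair]
    refine Finset.sum_congr rfl fun k _ => ?_
    have e1 : fderiv ℝ (fun z => u z s i) (x a s) (Pi.single k 1)
        = fderiv ℝ (fun q : (Fin 3 → ℝ) × ℝ => u q.1 q.2 i) (x a s, s) (Pi.single k 1, 0) :=
      fderiv_slice_fst (hud i) (x a s) s _
    have e2 : fderiv ℝ (fun b => x b s k) a (Pi.single j 1)
        = fderiv ℝ (Function.uncurry x) (a, s) (Pi.single j 1, 0) k := by
      have hgdk : Differentiable ℝ (fun p : (Fin 3 → ℝ) × ℝ => x p.1 p.2 k) :=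
        (hgc k).differentiable (by simp)
      exact (fderiv_slice_fst hgdk a s _).trans (fderiv_comp_proj hXdiff (a, s) k _)
    rw [e1, e2, smul_eq_mul]
    exact mul_comm _ _
  -- step 2: time derivative of the density along the flow
  have key2 : ∀ s : ℝ, HasDerivAt (fun τ => ρ (x a τ) τ)
      (-((∑ k, fderiv ℝ (fun z => u z s k) (x a s) (Pi.single k 1)) * ρ (x a s) s)) s := by
    intro s
    have hin : HasDerivAt (fun τ : ℝ => ((x a τ, τ) : (Fin 3 → ℝ) × ℝ))
        ((u (x a s) s, 1)) s := (hflow' a s).prodMk (hasDerivAt_id s)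
    have hout : HasFDerivAt (Function.uncurry ρ)
        (fderiv ℝ (Function.uncurry ρ) (x a s, s)) (x a s, s) := (hRdiff _).hasFDerivAt
    have H : HasDerivAt (fun τ => Function.uncurry ρ (x a τ, τ))
        (fderiv ℝ (Function.uncurry ρ) (x a s, s) ((u (x a s) s, 1))) s :=
      hout.comp_hasDerivAt (f := fun τ => (x a τ, τ)) s hin
    refine H.congr_deriv ?_; symm
    have hsplit : ((u (x a s) s, (1 : ℝ)) : (Fin 3 → ℝ) × ℝ)
        = (u (x a s) s, 0) + (0, 1) := by
      rw [Prod.mk_add_mk, add_zero, zero_add]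
    rw [hsplit, map_add, clm_apply_pair]
    have htime : fderiv ℝ (Function.uncurry ρ) (x a s, s) (0, 1)
        = deriv (fun τ => ρ (x a s) τ) s :=
      ((hasDerivAt_slice_snd hRdiff (x a s) s).deriv).symm
    rw [htime]
    have hspace : ∀ k : Fin 3, fderiv ℝ (Function.uncurry ρ) (x a s, s) (Pi.single k 1, 0)
        = fderiv ℝ (fun z => ρ z s) (x a s) (Pi.single k 1) :=
      fun k => (fderiv_slice_fst hRdiff (x a s) s _).symm
    simp only [hspace, smul_eq_mul]
    have hρd : DifferentiableAt ℝ (fun z => ρ z s) (x a s) := diff_slice_fst hRdiff s (x a s)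
    have hc := hcont (x a s) s
    have hprod : ∀ k : Fin 3, fderiv ℝ (fun z => ρ z s * u z s k) (x a s) (Pi.single k 1)
        = ρ (x a s) s * fderiv ℝ (fun z => u z s k) (x a s) (Pi.single k 1)
          + u (x a s) s k * fderiv ℝ (fun z => ρ z s) (x a s) (Pi.single k 1) := by
      intro k
      have hud' : DifferentiableAt ℝ (fun z => u z s k) (x a s) :=
        diff_slice_fst (hud k) s (x a s)
      rw [fderiv_fun_mul hρd hud']
      simp [smul_eq_mul]
    simp only [hprod] at hc
    rw [Fin.sum_univ_three] at hc ⊢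
    rw [Fin.sum_univ_three]
    linarith
  -- constancy of ρ·det along time
  have key : ∀ s : ℝ, ρ (x a s) s *
      (Matrix.of fun i j => fderiv ℝ (fun b => x b s i) a (Pi.single j 1)).det = ρ a 0 := by
    have hconst : ∀ s : ℝ, HasDerivAt (fun τ => ρ (x a τ) τ *
        (Matrix.of fun i j => fderiv ℝ (fun b => x b τ i) a (Pi.single j 1)).det) 0 s := by
      intro s
      refine hasDerivAt_mass (fun τ => ρ (x a τ) τ)
        (fun i j τ => fderiv ℝ (fun b => x b τ i) a (Pi.single j 1))
        (fun i k => fderiv ℝ (fun z => u z s i) (x a s) (Pi.single k 1)) s ?_ ?_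
      · have := key2 s
        rwa [Fin.sum_univ_three] at this
      · intro i j
        have := key1 i j s
        rwa [Fin.sum_univ_three] at this
    have hconst' := is_const_of_deriv_eq_zero
      (fun s => (hconst s).differentiableAt) (fun s => (hconst s).deriv)
    intro s
    have h0 : ρ (x a 0) 0 *
        (Matrix.of fun i j => fderiv ℝ (fun b => x b 0 i) a (Pi.single j 1)).det = ρ a 0 := by
      have hdet0 : (Matrix.of fun i j =>
          fderiv ℝ (fun b => x b 0 i) a (Pi.single j 1)) = (1 : Matrix (Fin 3) (Fin 3) ℝ) := by
        ext i j
        have hb : (fun b : Fin 3 → ℝ => x b 0 i) = fun b => b i := by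
          funext b; rw [hinit]
        rw [Matrix.of_apply, hb]
        have hproj : HasFDerivAt (fun b : Fin 3 → ℝ => b i)
            (ContinuousLinearMap.proj i : (Fin 3 → ℝ) →L[ℝ] ℝ) a :=
          (ContinuousLinearMap.proj i : (Fin 3 → ℝ) →L[ℝ] ℝ).hasFDerivAt
        rw [hproj.fderiv]
        simp [Matrix.one_apply, Pi.single_apply]
      rw [hdet0, Matrix.det_one, mul_one, hinit]
    calc ρ (x a s) s *
          (Matrix.of fun i j => fderiv ℝ (fun b => x b s i) a (Pi.single j 1)).det
        = ρ (x a 0) 0 *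
          (Matrix.of fun i j => fderiv ℝ (fun b => x b 0 i) a (Pi.single j 1)).det :=
          hconst' s 0
      _ = ρ a 0 := h0
  refine ⟨key t, ?_⟩
  rw [eq_div_iff (hρpos (x a t) t).ne', mul_comm]
  exact key t
end
end

section
/- Cauchy invariants theorem: Let x(a,t) be a smooth flow map with x(a,0) = a, ẋ = ∂ₜx, ẍ = ∂ₜẋ, and suppose that for all (a,t) the Lagrangian curl of the 1-form ẍ_k dx_k vanishes, i.e. ∂_{a_j}(ẍ_k ∂_{a_i}x_k) − ∂_{a_i}(ẍ_k ∂_{a_j}x_k) = 0 for all i,j (summation over k). Then the antisymmetric quantity C_{ij}(a,t) := ∂_{a_j}(ẋ_k) ∂_{a_i}(x_k) − ∂_{a_i}(ẋ_k) ∂_{a_j}(x_k) is independent of t, and equals the initial vorticity components ∂_{a_j}u₀_i − ∂_{a_i}u₀_j where u₀(a) = ẋ(a,0). -/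
noncomputable section
open ContinuousLinearMap


local notation "E3" => (Fin 3 → ℝ)
local notation "P3" => ((Fin 3 → ℝ) × ℝ)

-- slice lemmas
lemma slice_b {F : Type*} [NormedAddCommGroup F] [NormedSpace ℝ F]
    (f : P3 → F) (hf : ContDiff ℝ (⊤ : ℕ∞) f) (t : ℝ) (a : E3) (v : E3) :
    fderiv ℝ (fun b => f (b, t)) a v = fderiv ℝ f (a, t) (v, 0) := by
  have h1 : HasFDerivAt (fun b : E3 => (b, t)) ((ContinuousLinearMap.id ℝ E3).prod 0) a :=
    (hasFDerivAt_id a).prodMk (hasFDerivAt_const t a)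
  have h2 : HasFDerivAt (fun b => f (b, t))
      ((fderiv ℝ f (a, t)).comp ((ContinuousLinearMap.id ℝ E3).prod 0)) a :=
    ((hf.differentiable (by simp) (a, t)).hasFDerivAt).comp a h1
  rw [h2.fderiv]
  rfl

lemma slice_t {F : Type*} [NormedAddCommGroup F] [NormedSpace ℝ F]
    (f : P3 → F) (hf : ContDiff ℝ (⊤ : ℕ∞) f) (b : E3) (t : ℝ) :
    HasDerivAt (fun τ => f (b, τ)) (fderiv ℝ f (b, t) (0, 1)) t := by
  have h1 : HasFDerivAt (fun τ : ℝ => (b, τ)) ((0 : ℝ →L[ℝ] E3).prod (ContinuousLinearMap.id ℝ ℝ)) t :=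
    (hasFDerivAt_const b t).prodMk (hasFDerivAt_id t)
  have h2 := ((hf.differentiable (by simp) (b, t)).hasFDerivAt).comp t h1
  have := h2.hasDerivAt
  simpa [Function.comp_def] using this

-- component lemma
lemma fderiv_comp_proj_s6 (f : P3 → E3) (hf : ContDiff ℝ (⊤ : ℕ∞) f) (k : Fin 3) (p : P3) (w : P3) :
    fderiv ℝ (fun q => f q k) p w = (fderiv ℝ f p w) k := by
  have h : HasFDerivAt (fun q => f q k)
      ((ContinuousLinearMap.proj (R := ℝ) (φ := fun _ : Fin 3 => ℝ) k).comp (fderiv ℝ f p)) p :=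
    ((ContinuousLinearMap.proj (R := ℝ) (φ := fun _ : Fin 3 => ℝ) k).hasFDerivAt).comp p
      ((hf.differentiable (by simp) p).hasFDerivAt)
  rw [h.fderiv]
  rfl

-- symmetry of second derivative (scalar)
lemma symm2 (f : P3 → ℝ) (hf : ContDiff ℝ (⊤ : ℕ∞) f) (p : P3) (v w : P3) :
    fderiv ℝ (fun q => fderiv ℝ f q v) p w = fderiv ℝ (fun q => fderiv ℝ f q w) p v := by
  have hdf : DifferentiableAt ℝ (fderiv ℝ f) p :=
    ((hf.fderiv_right (m := (⊤ : ℕ∞)) (by simp)).differentiable (by simp)) p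
  have happ : ∀ u : P3, ∀ z : P3, fderiv ℝ (fun q => fderiv ℝ f q u) p z
      = fderiv ℝ (fderiv ℝ f) p z u := by
    intro u z
    have h := hdf.hasFDerivAt.clm_apply (hasFDerivAt_const u p)
    rw [h.fderiv]; simp
  have hsym : IsSymmSndFDerivAt ℝ f p := hf.contDiffAt.isSymmSndFDerivAt (by
    rw [minSmoothness_of_isRCLikeNormedField]; exact (WithTop.coe_le_coe.mpr (le_top : (2 : ℕ∞) ≤ ⊤)))
  rw [happ v w, happ w v, hsym w v]



section helpers
variable (x : E3 → ℝ → E3)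

def Xc (k : Fin 3) : P3 → ℝ := fun p => x p.1 p.2 k
def Gv : P3 → E3 := fun p => fderiv ℝ (Function.uncurry x) p (0, 1)
def Gc (k : Fin 3) : P3 → ℝ := fun p => fderiv ℝ (Xc x k) p (0, 1)
def Hc (k : Fin 3) : P3 → ℝ := fun p => fderiv ℝ (Gc x k) p (0, 1)

variable (hx : ContDiff ℝ (⊤ : ℕ∞) (Function.uncurry x))
include hx

lemma hXc (k : Fin 3) : ContDiff ℝ (⊤ : ℕ∞) (Xc x k) :=
  (ContinuousLinearMap.proj (R := ℝ) (φ := fun _ : Fin 3 => ℝ) k).contDiff.comp hx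

lemma hGv : ContDiff ℝ (⊤ : ℕ∞) (Gv x) :=
  (hx.fderiv_right (le_refl _)).clm_apply contDiff_const

lemma hGc (k : Fin 3) : ContDiff ℝ (⊤ : ℕ∞) (Gc x k) :=
  ((hXc x hx k).fderiv_right (le_refl _)).clm_apply contDiff_const

lemma hHc (k : Fin 3) : ContDiff ℝ (⊤ : ℕ∞) (Hc x k) :=
  ((hGc x hx k).fderiv_right (le_refl _)).clm_apply contDiff_const

lemma Gv_comp (k : Fin 3) (p : P3) : Gv x p k = Gc x k p := by
  have := fderiv_comp_proj_s6 (Function.uncurry x) hx k p (0, 1)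
  simp only [Gv, Gc]
  rw [← this]
  rfl

-- deriv of τ ↦ x b τ, component k
lemma deriv_comp1 (b : E3) (t : ℝ) (k : Fin 3) :
    deriv (fun τ => x b τ) t k = Gc x k (b, t) := by
  have h : HasDerivAt (fun τ => x b τ) (fderiv ℝ (Function.uncurry x) (b, t) (0, 1)) t :=
    slice_t (Function.uncurry x) hx b t
  rw [h.deriv]
  exact Gv_comp x hx k (b, t)

-- deriv of τ ↦ ẋ(b,τ), component k
lemma deriv_comp2 (b : E3) (t : ℝ) (k : Fin 3) :
    deriv (fun τ => deriv (fun σ => x b σ) τ) t k = Hc x k (b, t) := by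
  have hfun : (fun τ => deriv (fun σ => x b σ) τ) = fun τ => Gv x (b, τ) := by
    funext τ
    have h : HasDerivAt (fun σ => x b σ) (fderiv ℝ (Function.uncurry x) (b, τ) (0, 1)) τ :=
      slice_t (Function.uncurry x) hx b τ
    rw [h.deriv]; rfl
  rw [hfun]
  have h : HasDerivAt (fun τ => Gv x (b, τ)) (fderiv ℝ (Gv x) (b, t) (0, 1)) t :=
    slice_t (Gv x) (hGv x hx) b t
  rw [h.deriv]
  rw [← fderiv_comp_proj_s6 (Gv x) (hGv x hx) k (b, t) (0, 1)]
  have : (fun q => Gv x q k) = Gc x k := by funext q; exact Gv_comp x hx k q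
  rw [this]
  rfl

-- the spatial fderiv of ẋ_k
lemma fderiv_dot (a : E3) (t : ℝ) (k : Fin 3) (v : E3) :
    fderiv ℝ (fun b => deriv (fun τ => x b τ) t k) a v = fderiv ℝ (Gc x k) (a, t) (v, 0) := by
  have hfun : (fun b => deriv (fun τ => x b τ) t k) = fun b => Gc x k (b, t) := by
    funext b; exact deriv_comp1 x hx b t k
  rw [hfun, slice_b (Gc x k) (hGc x hx k) t a v]

lemma fderiv_pos (a : E3) (t : ℝ) (k : Fin 3) (v : E3) :
    fderiv ℝ (fun b => x b t k) a v = fderiv ℝ (Xc x k) (a, t) (v, 0) :=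
  slice_b (Xc x k) (hXc x hx k) t a v

end helpers

section helpers2
variable (x : (Fin 3 → ℝ) → ℝ → (Fin 3 → ℝ))

def DXc (i k : Fin 3) : P3 → ℝ := fun p => fderiv ℝ (Xc x k) p (Pi.single i 1, 0)
def DGc (i k : Fin 3) : P3 → ℝ := fun p => fderiv ℝ (Gc x k) p (Pi.single i 1, 0)
def DHc (i k : Fin 3) : P3 → ℝ := fun p => fderiv ℝ (Hc x k) p (Pi.single i 1, 0)
def Phi (i : Fin 3) : P3 → ℝ := fun p => ∑ k, Hc x k p * DXc x i k p

variable (hx : ContDiff ℝ (⊤ : ℕ∞) (Function.uncurry x))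
include hx

lemma hDXc (i k : Fin 3) : ContDiff ℝ (⊤ : ℕ∞) (DXc x i k) :=
  ((hXc x hx k).fderiv_right (le_refl _)).clm_apply contDiff_const

lemma hDGc (i k : Fin 3) : ContDiff ℝ (⊤ : ℕ∞) (DGc x i k) :=
  ((hGc x hx k).fderiv_right (le_refl _)).clm_apply contDiff_const

lemma cauchyC_eq (a : E3) (t : ℝ) (i j : Fin 3) :
    (∑ k, (fderiv ℝ (fun b => deriv (fun τ => x b τ) t k) a (Pi.single j 1) *
      fderiv ℝ (fun b => x b t k) a (Pi.single i 1)
    - fderiv ℝ (fun b => deriv (fun τ => x b τ) t k) a (Pi.single i 1) *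
      fderiv ℝ (fun b => x b t k) a (Pi.single j 1)))
    = ∑ k, (DGc x j k (a, t) * DXc x i k (a, t) - DGc x i k (a, t) * DXc x j k (a, t)) := by
  refine Finset.sum_congr rfl fun k _ => ?_
  rw [fderiv_dot x hx a t k, fderiv_dot x hx a t k, fderiv_pos x hx a t k, fderiv_pos x hx a t k]
  rfl

-- time derivative of DXc slice is DGc
lemma hasDerivAt_DXc (a : E3) (t : ℝ) (i k : Fin 3) :
    HasDerivAt (fun τ => DXc x i k (a, τ)) (DGc x i k (a, t)) t := by
  have h := slice_t (DXc x i k) (hDXc x hx i k) a t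
  have he : fderiv ℝ (DXc x i k) (a, t) (0, 1) = DGc x i k (a, t) := by
    have := symm2 (Xc x k) (hXc x hx k) (a, t) (Pi.single i 1, 0) (0, 1)
    exact this
  rwa [he] at h

lemma hasDerivAt_DGc (a : E3) (t : ℝ) (i k : Fin 3) :
    HasDerivAt (fun τ => DGc x i k (a, τ)) (DHc x i k (a, t)) t := by
  have h := slice_t (DGc x i k) (hDGc x hx i k) a t
  have he : fderiv ℝ (DGc x i k) (a, t) (0, 1) = DHc x i k (a, t) := by
    have := symm2 (Gc x k) (hGc x hx k) (a, t) (Pi.single i 1, 0) (0, 1)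
    exact this
  rwa [he] at h

-- the curl expression rewrite
lemma curl_fun_eq (i : Fin 3) (t : ℝ) :
    (fun b => ∑ k, deriv (fun τ => deriv (fun σ => x b σ) τ) t k *
        fderiv ℝ (fun c => x c t k) b (Pi.single i 1))
      = fun b => Phi x i (b, t) := by
  funext b
  refine Finset.sum_congr rfl fun k _ => ?_
  rw [deriv_comp2 x hx b t k, fderiv_pos x hx b t k]
  rfl

lemma hPhi (i : Fin 3) : ContDiff ℝ (⊤ : ℕ∞) (Phi x i) :=
  ContDiff.sum fun k _ => ((hHc x hx k).mul (hDXc x hx i k))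

lemma fderiv_Phi (i : Fin 3) (p : P3) (w : P3) :
    fderiv ℝ (Phi x i) p w
      = ∑ k, (Hc x k p * fderiv ℝ (DXc x i k) p w + DXc x i k p * fderiv ℝ (Hc x k) p w) := by
  have h : HasFDerivAt (Phi x i)
      (∑ k, (Hc x k p • fderiv ℝ (DXc x i k) p + DXc x i k p • fderiv ℝ (Hc x k) p)) p := by
    refine HasFDerivAt.fun_sum fun k _ => ?_
    exact (((hHc x hx k).differentiable (by simp) p).hasFDerivAt).mul
      (((hDXc x hx i k).differentiable (by simp) p).hasFDerivAt)
  rw [h.fderiv]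
  simp [ContinuousLinearMap.sum_apply]

end helpers2


/-- The Cauchy-invariant components
`C_{ij}(a,t) = Σ_k ∂_{a_j}ẋ_k ∂_{a_i}x_k − ∂_{a_i}ẋ_k ∂_{a_j}x_k`. -/
def cauchyC (x : (Fin 3 → ℝ) → ℝ → (Fin 3 → ℝ))
    (a : Fin 3 → ℝ) (t : ℝ) (i j : Fin 3) : ℝ :=
  ∑ k,
    (fderiv ℝ (fun b => deriv (fun τ => x b τ) t k) a (Pi.single j 1) *
      fderiv ℝ (fun b => x b t k) a (Pi.single i 1)
    - fderiv ℝ (fun b => deriv (fun τ => x b τ) t k) a (Pi.single i 1) *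
      fderiv ℝ (fun b => x b t k) a (Pi.single j 1))

/-- Cauchy invariants theorem: if the Lagrangian curl of the
1-form `ẍ_k dx_k` vanishes, then `C_{ij}` is time-independent and equals
the initial vorticity `∂_{a_j}u₀_i − ∂_{a_i}u₀_j`. -/
theorem cauchy_invariants
    (x : (Fin 3 → ℝ) → ℝ → (Fin 3 → ℝ))
    (hx : ContDiff ℝ (⊤ : ℕ∞) (Function.uncurry x))
    (hinit : ∀ a, x a 0 = a)
    (hcurl : ∀ (a : Fin 3 → ℝ) (t : ℝ) (i j : Fin 3),
      fderiv ℝ (fun b =>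
          ∑ k, deriv (fun τ => deriv (fun σ => x b σ) τ) t k *
            fderiv ℝ (fun c => x c t k) b (Pi.single i 1)) a (Pi.single j 1)
      - fderiv ℝ (fun b =>
          ∑ k, deriv (fun τ => deriv (fun σ => x b σ) τ) t k *
            fderiv ℝ (fun c => x c t k) b (Pi.single j 1)) a (Pi.single i 1)
      = 0) :
    ∀ (a : Fin 3 → ℝ) (t : ℝ) (i j : Fin 3),
      cauchyC x a t i j = cauchyC x a 0 i j
      ∧ cauchyC x a t i j
          = fderiv ℝ (fun b => deriv (fun τ => x b τ) 0 i) a (Pi.single j 1)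
            - fderiv ℝ (fun b => deriv (fun τ => x b τ) 0 j) a (Pi.single i 1) := by
  intro a t i j
  -- transformed curl identity
  have hcurl' : ∀ (s : ℝ),
      ∑ k, (DXc x i k (a, s) * DHc x j k (a, s) - DXc x j k (a, s) * DHc x i k (a, s)) = 0 := by
    intro s
    have h := hcurl a s i j
    rw [curl_fun_eq x hx i s, curl_fun_eq x hx j s,
      slice_b (Phi x i) (hPhi x hx i) s a (Pi.single j 1),
      slice_b (Phi x j) (hPhi x hx j) s a (Pi.single i 1),
      fderiv_Phi x hx i (a, s) (Pi.single j 1, 0),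
      fderiv_Phi x hx j (a, s) (Pi.single i 1, 0)] at h
    rw [← Finset.sum_sub_distrib] at h
    rw [← h]
    refine Finset.sum_congr rfl fun k _ => ?_
    have hsym := symm2 (Xc x k) (hXc x hx k) (a, s) (Pi.single i 1, 0) (Pi.single j 1, 0)
    have e1 : fderiv ℝ (DXc x i k) (a, s) (Pi.single j 1, 0)
        = fderiv ℝ (DXc x j k) (a, s) (Pi.single i 1, 0) := hsym
    have e2 : fderiv ℝ (Hc x k) (a, s) (Pi.single j 1, 0) = DHc x j k (a, s) := rfl
    have e3 : fderiv ℝ (Hc x k) (a, s) (Pi.single i 1, 0) = DHc x i k (a, s) := rfl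
    rw [e1, e2, e3]
    ring
  -- C as nice function of time, with zero derivative
  have hfun : (fun s => cauchyC x a s i j)
      = fun s => ∑ k, (DGc x j k (a, s) * DXc x i k (a, s) - DGc x i k (a, s) * DXc x j k (a, s)) := by
    funext s
    exact cauchyC_eq x hx a s i j
  have hder : ∀ s : ℝ, HasDerivAt (fun s => cauchyC x a s i j) 0 s := by
    intro s
    rw [hfun]
    have h : HasDerivAt (fun s => ∑ k,
        (DGc x j k (a, s) * DXc x i k (a, s) - DGc x i k (a, s) * DXc x j k (a, s)))
        (∑ k, ((DHc x j k (a, s) * DXc x i k (a, s) + DGc x j k (a, s) * DGc x i k (a, s))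
          - (DHc x i k (a, s) * DXc x j k (a, s) + DGc x i k (a, s) * DGc x j k (a, s)))) s := by
      refine HasDerivAt.fun_sum fun k _ => ?_
      exact ((hasDerivAt_DGc x hx a s j k).mul (hasDerivAt_DXc x hx a s i k)).sub
        ((hasDerivAt_DGc x hx a s i k).mul (hasDerivAt_DXc x hx a s j k))
    have hz : (∑ k, ((DHc x j k (a, s) * DXc x i k (a, s) + DGc x j k (a, s) * DGc x i k (a, s))
          - (DHc x i k (a, s) * DXc x j k (a, s) + DGc x i k (a, s) * DGc x j k (a, s)))) = 0 := by
      rw [← hcurl' s]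
      refine Finset.sum_congr rfl fun k _ => ?_
      ring
    rwa [hz] at h
  have hconst : cauchyC x a t i j = cauchyC x a 0 i j :=
    is_const_of_deriv_eq_zero (fun s => (hder s).differentiableAt)
      (fun s => (hder s).deriv) t 0
  -- value at time 0
  have hval : cauchyC x a 0 i j
      = fderiv ℝ (fun b => deriv (fun τ => x b τ) 0 i) a (Pi.single j 1)
        - fderiv ℝ (fun b => deriv (fun τ => x b τ) 0 j) a (Pi.single i 1) := by
    have hx0 : ∀ k : Fin 3, (fun b : E3 => x b 0 k) = fun b : E3 => b k := by
      intro k; funext b; rw [hinit b]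
    have hfe : ∀ (k m : Fin 3), fderiv ℝ (fun b : E3 => b k) a (Pi.single m 1) = (Pi.single m 1 : E3) k := by
      intro k m
      rw [show (fun b : E3 => b k)
        = ⇑(ContinuousLinearMap.proj (R := ℝ) (φ := fun _ : Fin 3 => ℝ) k) from rfl,
        ContinuousLinearMap.fderiv]
      rfl
    unfold cauchyC
    simp only [hx0, hfe, Pi.single_apply, mul_ite, mul_one, mul_zero]
    rw [Finset.sum_sub_distrib]
    simp
  exact ⟨hconst, hconst.trans hval⟩
end
end

section
/- Kelvin circulation theorem (Hankel's form): Let u be a smooth solution of ẍ = ∇Ω along the flow (i.e., the barotropic Euler equations with acceleration a gradient), with flow map x(a,t), x(a,0)=a. Then for any smooth closed curve γ₀ of labels, the circulation ∮_{γ_t} u(·,t)·dx along the transported curve γ_t = x(γ₀,t) is independent of t, and equals ∮_{γ₀} u₀·da where u₀ = u(·,0). -/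
noncomputable section

open Function

private lemma clm_pi_apply (L : (Fin 3 → ℝ) →L[ℝ] ℝ) (v : Fin 3 → ℝ) :
    L v = ∑ k, v k * L (Pi.single k 1) := by
  conv_lhs => rw [← Finset.univ_sum_single v]
  rw [map_sum]
  refine Finset.sum_congr rfl fun k _ => ?_
  have h : Pi.single k (v k) = v k • (Pi.single k (1:ℝ) : Fin 3 → ℝ) := by
    ext j
    simp [Pi.single_apply, mul_comm]
  rw [h, map_smul, smul_eq_mul]

section Setup

variable (x u : (Fin 3 → ℝ) → ℝ → (Fin 3 → ℝ))
variable (Ω : (Fin 3 → ℝ) → ℝ → ℝ)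
variable (γ₀ : ℝ → (Fin 3 → ℝ))

/-- the transported curve as a function of (s,t) -/
private def Gf : ℝ × ℝ → (Fin 3 → ℝ) := fun p => x (γ₀ p.1) p.2

/-- the velocity along the curve -/
private def Uf : ℝ × ℝ → (Fin 3 → ℝ) := fun p => u (x (γ₀ p.1) p.2) p.2

/-- ∂ₛ of the curve -/
private def Pf : ℝ × ℝ → (Fin 3 → ℝ) := fun p => fderiv ℝ (Gf x γ₀) p (1, 0)

/-- the mixed second derivative -/
private def Qf : ℝ × ℝ → (Fin 3 → ℝ) :=
  fun p => fderiv ℝ (fderiv ℝ (Gf x γ₀)) p (0, 1) (1, 0)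

/-- the acceleration -/
private def Af : ℝ × ℝ → (Fin 3 → ℝ) :=
  fun p k => fderiv ℝ (fun y => Ω y p.2) (x (γ₀ p.1) p.2) (Pi.single k 1)

/-- circulation integrand -/
private def Hf : ℝ × ℝ → ℝ := fun p => ∑ k, Uf x u γ₀ p k * Pf x γ₀ p k

/-- the "Bernoulli" potential -/
private def Kf : ℝ × ℝ → ℝ :=
  fun p => Ω (x (γ₀ p.1) p.2) p.2 + ∑ k, Uf x u γ₀ p k ^ 2 / 2

/-- ∂ₜ of the circulation integrand -/
private def Rf : ℝ × ℝ → ℝ :=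
  fun p => (∑ k, Af x Ω γ₀ p k * Pf x γ₀ p k) + ∑ k, Uf x u γ₀ p k * Qf x γ₀ p k

end Setup

section Lemmas

variable {x u : (Fin 3 → ℝ) → ℝ → (Fin 3 → ℝ)}
variable {Ω : (Fin 3 → ℝ) → ℝ → ℝ}
variable {γ₀ : ℝ → (Fin 3 → ℝ)}
variable (hx : ContDiff ℝ (⊤ : ℕ∞) (Function.uncurry x))
variable (hu : ContDiff ℝ (⊤ : ℕ∞) (Function.uncurry u))
variable (hΩ : ContDiff ℝ (⊤ : ℕ∞) (Function.uncurry Ω))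
variable (hγ : ContDiff ℝ (⊤ : ℕ∞) γ₀)
variable (hflow : ∀ a t, deriv (fun τ => x a τ) t = u (x a t) t)
variable (hacc : ∀ a t,
      deriv (fun τ => deriv (fun σ => x a σ) τ) t
        = fun k => fderiv ℝ (fun y => Ω y t) (x a t) (Pi.single k 1))

include hx hγ in
private lemma hG : ContDiff ℝ (⊤ : ℕ∞) (Gf x γ₀) :=
  hx.comp ((hγ.comp contDiff_fst).prodMk contDiff_snd)

include hx hu hγ in
private lemma hU : ContDiff ℝ (⊤ : ℕ∞) (Uf x u γ₀) :=
  hu.comp ((hG hx hγ).prodMk contDiff_snd)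

include hx hγ in
private lemma hF1 : ContDiff ℝ (⊤ : ℕ∞) (fderiv ℝ (Gf x γ₀)) :=
  (hG hx hγ).fderiv_right (by simp)

include hx hγ in
private lemma hGs (s t : ℝ) :
    HasDerivAt (fun σ => Gf x γ₀ (σ, t)) (Pf x γ₀ (s, t)) s := by
  have h := ((hG hx hγ).differentiable (by simp) (s, t)).hasFDerivAt.comp_hasDerivAt s
    ((hasDerivAt_id s).prodMk (hasDerivAt_const s t))
  exact h

include hx hγ in
private lemma hGt (s t : ℝ) :
    HasDerivAt (fun τ => Gf x γ₀ (s, τ)) (fderiv ℝ (Gf x γ₀) (s, t) (0, 1)) t :=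
  ((hG hx hγ).differentiable (by simp) (s, t)).hasFDerivAt.comp_hasDerivAt t
    ((hasDerivAt_const t s).prodMk (hasDerivAt_id t))

include hx hγ hflow in
private lemma hUeq (s t : ℝ) :
    fderiv ℝ (Gf x γ₀) (s, t) (0, 1) = Uf x u γ₀ (s, t) := by
  have h1 := (hGt hx hγ s t).deriv
  have h2 : deriv (fun τ => Gf x γ₀ (s, τ)) t = u (x (γ₀ s) t) t := hflow (γ₀ s) t
  rw [← h1, h2]; rfl

include hx hγ in
private lemma hsymm (p : ℝ × ℝ) (v w : ℝ × ℝ) :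
    fderiv ℝ (fderiv ℝ (Gf x γ₀)) p v w = fderiv ℝ (fderiv ℝ (Gf x γ₀)) p w v :=
  second_derivative_symmetric
    (fun y => ((hG hx hγ).differentiable (by simp) y).hasFDerivAt)
    (((hF1 hx hγ).differentiable (by simp) p).hasFDerivAt) v w

include hx hγ in
private lemma hPt (s t : ℝ) :
    HasDerivAt (fun τ => Pf x γ₀ (s, τ)) (Qf x γ₀ (s, t)) t := by
  have h1 : HasDerivAt (fun τ => fderiv ℝ (Gf x γ₀) (s, τ))
      (fderiv ℝ (fderiv ℝ (Gf x γ₀)) (s, t) (0, 1)) t :=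
    ((hF1 hx hγ).differentiable (by simp) (s, t)).hasFDerivAt.comp_hasDerivAt t
      ((hasDerivAt_const t s).prodMk (hasDerivAt_id t))
  have h2 := h1.clm_apply (hasDerivAt_const t ((1:ℝ), (0:ℝ)))
  simpa [Pf, Qf] using h2

include hx hu hγ hflow in
private lemma hUs (s t : ℝ) :
    HasDerivAt (fun σ => Uf x u γ₀ (σ, t)) (Qf x γ₀ (s, t)) s := by
  have h1 : HasDerivAt (fun σ => fderiv ℝ (Gf x γ₀) (σ, t))
      (fderiv ℝ (fderiv ℝ (Gf x γ₀)) (s, t) (1, 0)) s :=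
    ((hF1 hx hγ).differentiable (by simp) (s, t)).hasFDerivAt.comp_hasDerivAt s
      ((hasDerivAt_id s).prodMk (hasDerivAt_const s t))
  have h2 := h1.clm_apply (hasDerivAt_const s ((0:ℝ), (1:ℝ)))
  simp only [map_zero, add_zero] at h2
  have h3 : (fun σ => fderiv ℝ (Gf x γ₀) (σ, t) (0, 1))
      = fun σ => Uf x u γ₀ (σ, t) :=
    funext fun σ => hUeq hx hγ hflow σ t
  rw [h3] at h2
  have h4 := hsymm hx hγ (s, t) ((1:ℝ),(0:ℝ)) ((0:ℝ),(1:ℝ))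
  rw [h4] at h2
  exact h2

include hx hu hγ hflow hacc in
private lemma hUt (s t : ℝ) :
    HasDerivAt (fun τ => Uf x u γ₀ (s, τ)) (Af x Ω γ₀ (s, t)) t := by
  have hUc : ContDiff ℝ (⊤ : ℕ∞) (fun τ => u (x (γ₀ s) τ) τ) := by
    have : ContDiff ℝ (⊤ : ℕ∞) (fun τ => x (γ₀ s) τ) :=
      hx.comp (contDiff_const.prodMk contDiff_id)
    exact hu.comp (this.prodMk contDiff_id)
  have hd : DifferentiableAt ℝ (fun τ => u (x (γ₀ s) τ) τ) t :=
    (hUc.differentiable (by simp)) t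
  have heq : (fun τ => u (x (γ₀ s) τ) τ)
      = fun τ => deriv (fun σ => x (γ₀ s) σ) τ :=
    funext fun τ => (hflow (γ₀ s) τ).symm
  have hh := hd.hasDerivAt
  rw [show deriv (fun τ => u (x (γ₀ s) τ) τ) t
      = fun k => fderiv ℝ (fun y => Ω y t) (x (γ₀ s) t) (Pi.single k 1) by
    rw [heq]; exact hacc (γ₀ s) t] at hh
  exact hh

include hΩ in
private lemma Af_eq (p : ℝ × ℝ) (k : Fin 3) :
    Af x Ω γ₀ p k
      = fderiv ℝ (Function.uncurry Ω) (x (γ₀ p.1) p.2, p.2) (Pi.single k 1, 0) := by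
  have h1 : HasFDerivAt (fun y => Ω y p.2)
      ((fderiv ℝ (Function.uncurry Ω) (x (γ₀ p.1) p.2, p.2)).comp
        (ContinuousLinearMap.inl ℝ (Fin 3 → ℝ) ℝ)) (x (γ₀ p.1) p.2) := by
    have h := ((hΩ.differentiable (by simp) (x (γ₀ p.1) p.2, p.2)).hasFDerivAt).comp
      (x (γ₀ p.1) p.2) (hasFDerivAt_prodMk_left (𝕜 := ℝ) (x (γ₀ p.1) p.2) p.2)
    exact h
  show fderiv ℝ (fun y => Ω y p.2) (x (γ₀ p.1) p.2) (Pi.single k 1) = _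
  rw [h1.fderiv]; rfl

include hΩ in
private lemma omega_chain (G : ℝ → (Fin 3 → ℝ)) (P : Fin 3 → ℝ) (t s : ℝ)
    (hGd : HasDerivAt G P s) :
    HasDerivAt (fun σ => Ω (G σ) t)
      (∑ k, fderiv ℝ (fun y => Ω y t) (G s) (Pi.single k 1) * P k) s := by
  have hΩd : DifferentiableAt ℝ (fun y => Ω y t) (G s) := by
    have : ContDiff ℝ (⊤ : ℕ∞) (fun y => Ω y t) := hΩ.comp (contDiff_id.prodMk contDiff_const)
    exact this.differentiable (by simp) (G s)
  have h1 := hΩd.hasFDerivAt.comp_hasDerivAt s hGd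
  have h2 : fderiv ℝ (fun y => Ω y t) (G s) P
      = ∑ k, fderiv ℝ (fun y => Ω y t) (G s) (Pi.single k 1) * P k := by
    rw [clm_pi_apply]
    exact Finset.sum_congr rfl fun k _ => mul_comm _ _
  rw [h2] at h1
  exact h1

private lemma kinetic_deriv (U : ℝ → (Fin 3 → ℝ)) (Q : Fin 3 → ℝ) (s : ℝ)
    (hUd : HasDerivAt U Q s) :
    HasDerivAt (fun σ => ∑ k, U σ k ^ 2 / 2) (∑ k, U s k * Q k) s := by
  have h : ∀ k : Fin 3, HasDerivAt (fun σ => U σ k ^ 2 / 2) (U s k * Q k) s := by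
    intro k
    have hk : HasDerivAt (fun σ => U σ k) (Q k) s := hasDerivAt_pi.1 hUd k
    have := (hk.fun_pow 2).div_const 2
    refine this.congr_deriv ?_
    norm_num
    ring
  exact HasDerivAt.fun_sum (fun k _ => h k)

private lemma circ_prod_rule (U P : ℝ → (Fin 3 → ℝ)) (A Q : Fin 3 → ℝ) (t : ℝ)
    (hUd : HasDerivAt U A t) (hPd : HasDerivAt P Q t) :
    HasDerivAt (fun τ => ∑ k, U τ k * P τ k)
      ((∑ k, A k * P t k) + ∑ k, U t k * Q k) t := by
  have h : ∀ k : Fin 3, HasDerivAt (fun τ => U τ k * P τ k)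
      (A k * P t k + U t k * Q k) t := fun k =>
    (hasDerivAt_pi.1 hUd k).mul (hasDerivAt_pi.1 hPd k)
  have := HasDerivAt.fun_sum (u := Finset.univ) (fun k _ => h k)
  rwa [Finset.sum_add_distrib] at this

include hx hu hΩ hγ hflow in
private lemma hKs (s t : ℝ) :
    HasDerivAt (fun σ => Kf x u Ω γ₀ (σ, t)) (Rf x u Ω γ₀ (s, t)) s := by
  have part1 : HasDerivAt (fun σ => Ω (Gf x γ₀ (σ, t)) t)
      (∑ k, Af x Ω γ₀ (s, t) k * Pf x γ₀ (s, t) k) s :=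
    omega_chain hΩ (fun σ => Gf x γ₀ (σ, t)) (Pf x γ₀ (s, t)) t s (hGs hx hγ s t)
  have part2 : HasDerivAt (fun σ => ∑ k, Uf x u γ₀ (σ, t) k ^ 2 / 2)
      (∑ k, Uf x u γ₀ (s, t) k * Qf x γ₀ (s, t) k) s :=
    kinetic_deriv (fun σ => Uf x u γ₀ (σ, t)) (Qf x γ₀ (s, t)) s
      (hUs hx hu hγ hflow s t)
  exact part1.add part2

include hx hu hΩ hγ hflow hacc in
private lemma hHt (s t : ℝ) :
    HasDerivAt (fun τ => Hf x u γ₀ (s, τ)) (Rf x u Ω γ₀ (s, t)) t :=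
  circ_prod_rule (fun τ => Uf x u γ₀ (s, τ)) (fun τ => Pf x γ₀ (s, τ))
    (Af x Ω γ₀ (s, t)) (Qf x γ₀ (s, t)) t
    (hUt hx hu hγ hflow hacc s t) (hPt hx hγ s t)

include hx hu hγ in
private lemma hHcont : Continuous (Hf x u γ₀) := by
  refine continuous_finset_sum _ fun k _ => Continuous.mul ?_ ?_
  · exact (continuous_apply k).comp (hU hx hu hγ).continuous
  · exact (continuous_apply k).comp
      (Continuous.clm_apply (hF1 hx hγ).continuous continuous_const)

include hx hu hΩ hγ in
private lemma hRcont : Continuous (Rf x u Ω γ₀) := by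
  have hPc : Continuous (Pf x γ₀) :=
    Continuous.clm_apply (hF1 hx hγ).continuous continuous_const
  have hQc : Continuous (Qf x γ₀) :=
    Continuous.clm_apply
      (Continuous.clm_apply ((hF1 hx hγ).fderiv_right (m := (⊤ : ℕ∞)) (by simp)).continuous
        continuous_const) continuous_const
  have hAc : ∀ k : Fin 3, Continuous fun p => Af x Ω γ₀ p k := by
    intro k
    have : Continuous fun p : ℝ × ℝ =>
        fderiv ℝ (Function.uncurry Ω) (x (γ₀ p.1) p.2, p.2) (Pi.single k 1, 0) :=
      Continuous.clm_apply ((hΩ.fderiv_right (m := (⊤ : ℕ∞)) (by simp)).continuous.comp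
        ((hG hx hγ).continuous.prodMk continuous_snd)) continuous_const
    simpa only [← Af_eq hΩ] using this
  refine Continuous.add ?_ ?_
  · exact continuous_finset_sum _ fun k _ =>
      (hAc k).mul ((continuous_apply k).comp hPc)
  · exact continuous_finset_sum _ fun k _ =>
      ((continuous_apply k).comp (hU hx hu hγ).continuous).mul
        ((continuous_apply k).comp hQc)

end Lemmas

private lemma hasDerivAt_param_integral
    {H R : ℝ × ℝ → ℝ} (hH : Continuous H) (hR : Continuous R)
    (hd : ∀ s t, HasDerivAt (fun τ => H (s, τ)) (R (s, t)) t) (t₀ : ℝ) :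
    HasDerivAt (fun τ => ∫ s in (0:ℝ)..1, H (s, τ))
      (∫ s in (0:ℝ)..1, R (s, t₀)) t₀ := by
  obtain ⟨M, hM⟩ := ((isCompact_uIcc (a := (0:ℝ)) (b := 1)).prod
    (isCompact_closedBall t₀ 1)).exists_bound_of_continuousOn hR.continuousOn
  have main := intervalIntegral.hasDerivAt_integral_of_dominated_loc_of_deriv_le
    (F := fun τ s => H (s, τ)) (F' := fun τ s => R (s, τ)) (bound := fun _ => M)
    (a := 0) (b := 1) (μ := MeasureTheory.volume) (x₀ := t₀) (Metric.ball_mem_nhds t₀ one_pos)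
    (Filter.Eventually.of_forall fun τ =>
      (hH.comp (continuous_id.prodMk continuous_const)).aestronglyMeasurable)
    ((hH.comp (continuous_id.prodMk continuous_const)).intervalIntegrable 0 1)
    ((hR.comp (continuous_id.prodMk continuous_const)).aestronglyMeasurable)
    (Filter.Eventually.of_forall fun s hs τ hτ =>
      hM (s, τ) ⟨Set.uIoc_subset_uIcc hs, Metric.ball_subset_closedBall hτ⟩)
    intervalIntegrable_const
    (Filter.Eventually.of_forall fun s _ τ _ => hd s τ)
  exact main.2

/-- Kelvin circulation theorem (Hankel's form): if the material
acceleration is an Eulerian gradient, the circulation along a transported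
closed curve is independent of time and equals the initial circulation. -/
theorem kelvin_circulation_theorem
    (x u : (Fin 3 → ℝ) → ℝ → (Fin 3 → ℝ))
    (Ω : (Fin 3 → ℝ) → ℝ → ℝ)
    (γ₀ : ℝ → (Fin 3 → ℝ))
    (hx : ContDiff ℝ (⊤ : ℕ∞) (Function.uncurry x))
    (hu : ContDiff ℝ (⊤ : ℕ∞) (Function.uncurry u))
    (hΩ : ContDiff ℝ (⊤ : ℕ∞) (Function.uncurry Ω))
    (hγ : ContDiff ℝ (⊤ : ℕ∞) γ₀)
    (hclosed : γ₀ 0 = γ₀ 1)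
    (hflow : ∀ a t, deriv (fun τ => x a τ) t = u (x a t) t)
    (hinit : ∀ a, x a 0 = a)
    (hacc : ∀ a t,
      deriv (fun τ => deriv (fun σ => x a σ) τ) t
        = fun k => fderiv ℝ (fun y => Ω y t) (x a t) (Pi.single k 1)) :
    ∀ t t' : ℝ,
      (∫ s in (0:ℝ)..1,
        ∑ k, u (x (γ₀ s) t) t k * deriv (fun σ => x (γ₀ σ) t k) s)
      = (∫ s in (0:ℝ)..1,
          ∑ k, u (x (γ₀ s) t') t' k * deriv (fun σ => x (γ₀ σ) t' k) s)
      ∧ (∫ s in (0:ℝ)..1,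
          ∑ k, u (x (γ₀ s) t) t k * deriv (fun σ => x (γ₀ σ) t k) s)
        = ∫ s in (0:ℝ)..1, ∑ k, u (γ₀ s) 0 k * deriv (fun σ => γ₀ σ k) s := by
  -- the stated circulation integrand equals Hf
  have hmatch : ∀ τ : ℝ,
      (∫ s in (0:ℝ)..1,
        ∑ k, u (x (γ₀ s) τ) τ k * deriv (fun σ => x (γ₀ σ) τ k) s)
      = ∫ s in (0:ℝ)..1, Hf x u γ₀ (s, τ) := by
    intro τ
    refine intervalIntegral.integral_congr fun s _ => ?_
    refine Finset.sum_congr rfl fun k _ => ?_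
    have hP : HasDerivAt (fun σ => x (γ₀ σ) τ k) (Pf x γ₀ (s, τ) k) s :=
      hasDerivAt_pi.1 (hGs hx hγ s τ) k
    rw [hP.deriv]
    rfl
  -- derivative of the circulation is an exact s-derivative integral, hence 0
  have hzero : ∀ τ : ℝ, (∫ s in (0:ℝ)..1, Rf x u Ω γ₀ (s, τ)) = 0 := by
    intro τ
    have hint : IntervalIntegrable (fun s => Rf x u Ω γ₀ (s, τ))
        MeasureTheory.volume 0 1 :=
      ((hRcont hx hu hΩ hγ).comp
        (continuous_id.prodMk continuous_const)).intervalIntegrable 0 1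
    have hftc := intervalIntegral.integral_eq_sub_of_hasDerivAt
      (f := fun s => Kf x u Ω γ₀ (s, τ)) (f' := fun s => Rf x u Ω γ₀ (s, τ))
      (fun s _ => hKs hx hu hΩ hγ hflow s τ) hint
    rw [hftc]
    show Kf x u Ω γ₀ (1, τ) - Kf x u Ω γ₀ (0, τ) = 0
    simp only [Kf, Uf, hclosed, sub_self]
  -- the circulation is constant in time
  have hconst : ∀ a b : ℝ,
      (∫ s in (0:ℝ)..1, Hf x u γ₀ (s, a))
      = ∫ s in (0:ℝ)..1, Hf x u γ₀ (s, b) := by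
    intro a b
    have hder : ∀ t₀ : ℝ,
        HasDerivAt (fun τ => ∫ s in (0:ℝ)..1, Hf x u γ₀ (s, τ))
          (∫ s in (0:ℝ)..1, Rf x u Ω γ₀ (s, t₀)) t₀ :=
      hasDerivAt_param_integral (hHcont hx hu hγ) (hRcont hx hu hΩ hγ)
        (fun s t => hHt hx hu hΩ hγ hflow hacc s t)
    exact is_const_of_deriv_eq_zero
      (fun t₀ => ((hder t₀).differentiableAt : _))
      (fun t₀ => by rw [(hder t₀).deriv, hzero]) a b
  intro t t'
  constructor
  · rw [hmatch t, hmatch t', hconst t t']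
  · rw [hmatch t, hconst t 0]
    refine intervalIntegral.integral_congr fun s _ => ?_
    refine Finset.sum_congr rfl fun k _ => ?_
    have hP : HasDerivAt (fun σ => x (γ₀ σ) 0 k) (Pf x γ₀ (s, 0) k) s :=
      hasDerivAt_pi.1 (hGs hx hγ s 0) k
    have heq : (fun σ => x (γ₀ σ) 0 k) = fun σ => γ₀ σ k :=
      funext fun σ => by rw [hinit]
    rw [heq] at hP
    show Uf x u γ₀ (s, 0) k * Pf x γ₀ (s, 0) k = _
    rw [← hP.deriv]
    simp only [Uf, hinit]
end
end

section
/- Derivative of circulation: under the hypotheses of the flow map x with ∂ₜx(a,t)=u(x(a,t),t) and a smooth closed label curve γ₀, d/dt ∮_{γ_t} u·dx = ∮_{γ₀} (ẍ∘γ₀)·d(x∘γ₀), i.e., the time derivative of circulation equals the line integral of the material acceleration; in particular the term from differentiating dx contributes ∮ d(|ẋ|²/2) = 0. -/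
noncomputable section

open intervalIntegral Metric Set

/-- slice derivative in the second variable -/
lemma slice2 {E : Type*} [NormedAddCommGroup E] [NormedSpace ℝ E]
    {G : ℝ × ℝ → E} (hG : Differentiable ℝ G) (s t : ℝ) :
    HasDerivAt (fun τ => G (s, τ)) (fderiv ℝ G (s, t) (0, 1)) t :=
  (hG (s, t)).hasFDerivAt.comp_hasDerivAt t
    (HasDerivAt.prodMk (hasDerivAt_const t s) (hasDerivAt_id t))

/-- slice derivative in the first variable -/
lemma slice1 {E : Type*} [NormedAddCommGroup E] [NormedSpace ℝ E]
    {G : ℝ × ℝ → E} (hG : Differentiable ℝ G) (s t : ℝ) :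
    HasDerivAt (fun σ => G (σ, t)) (fderiv ℝ G (s, t) (1, 0)) s :=
  (hG (s, t)).hasFDerivAt.comp_hasDerivAt s
    (HasDerivAt.prodMk (hasDerivAt_id s) (hasDerivAt_const s t))

/-- differentiation under the interval integral for a C¹ function of two variables -/
lemma deriv_under_integral {G : ℝ × ℝ → ℝ} (hG : ContDiff ℝ (⊤ : ℕ∞) G) (t : ℝ) :
    HasDerivAt (fun τ => ∫ s in (0:ℝ)..1, G (s, τ))
      (∫ s in (0:ℝ)..1, fderiv ℝ G (s, t) (0, 1)) t := by
  have hGd : Differentiable ℝ G := hG.differentiable (by simp)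
  have hG' : Continuous fun p : ℝ × ℝ => fderiv ℝ G p (0, 1) :=
    ((hG.fderiv_right (m := (⊤ : ℕ∞)) (by simp)).continuous).clm_apply continuous_const
  obtain ⟨C, hC⟩ := (((isCompact_Icc (a := (0:ℝ)) (b := 1)).prod
      (isCompact_Icc (a := t - 1) (b := t + 1)))).exists_bound_of_continuousOn
      (hG'.continuousOn)
  have key := intervalIntegral.hasDerivAt_integral_of_dominated_loc_of_deriv_le
      (F := fun τ s => G (s, τ)) (F' := fun τ s => fderiv ℝ G (s, τ) (0, 1))
      (x₀ := t) (a := 0) (b := 1) (bound := fun _ => C) (μ := MeasureTheory.volume)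
      (Metric.ball_mem_nhds t one_pos)
      (Filter.Eventually.of_forall fun τ =>
        ((hG.continuous.comp (continuous_id.prodMk continuous_const)).aestronglyMeasurable))
      ((hG.continuous.comp (continuous_id.prodMk continuous_const)).intervalIntegrable 0 1)
      ((hG'.comp (continuous_id.prodMk continuous_const)).aestronglyMeasurable)
      ?_ (intervalIntegrable_const) ?_
  · exact key.2
  · refine Filter.Eventually.of_forall fun s hs τ hτ => ?_
    refine hC (s, τ) ⟨?_, ?_⟩
    · rw [uIoc_of_le (by norm_num)] at hs; exact ⟨hs.1.le, hs.2⟩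
    · rw [mem_ball, Real.dist_eq] at hτ
      constructor <;> [linarith [abs_lt.1 hτ |>.1]; linarith [abs_lt.1 hτ |>.2]]
  · exact Filter.Eventually.of_forall fun s _ τ _ => slice2 hGd s τ

/-- the time derivative of the circulation along a transported
closed curve equals the line integral of the material acceleration. -/
theorem circulation_time_derivative
    (x u : (Fin 3 → ℝ) → ℝ → (Fin 3 → ℝ))
    (γ₀ : ℝ → (Fin 3 → ℝ))
    (hx : ContDiff ℝ (⊤ : ℕ∞) (Function.uncurry x))
    (hu : ContDiff ℝ (⊤ : ℕ∞) (Function.uncurry u))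
    (hγ : ContDiff ℝ (⊤ : ℕ∞) γ₀)
    (hclosed : γ₀ 0 = γ₀ 1)
    (hflow : ∀ a t, deriv (fun τ => x a τ) t = u (x a t) t) :
    ∀ t : ℝ,
      deriv (fun τ => ∫ s in (0:ℝ)..1,
          ∑ k, deriv (fun σ => x (γ₀ s) σ) τ k * deriv (fun σ => x (γ₀ σ) τ k) s) t
      = ∫ s in (0:ℝ)..1,
          ∑ k, deriv (fun τ => deriv (fun σ => x (γ₀ s) σ) τ) t k *
            deriv (fun σ => x (γ₀ σ) t k) s := by
  intro t
  -- the flow along labels, as a function of (s, τ)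
  set F : ℝ × ℝ → (Fin 3 → ℝ) := fun p => x (γ₀ p.1) p.2 with hFdef
  have hF : ContDiff ℝ (⊤ : ℕ∞) F :=
    hx.comp (ContDiff.prodMk (hγ.comp contDiff_fst) contDiff_snd)
  have hFd : Differentiable ℝ F := hF.differentiable (by simp)
  set V : ℝ × ℝ → (Fin 3 → ℝ) := fun p => fderiv ℝ F p (0, 1) with hVdef
  set W : ℝ × ℝ → (Fin 3 → ℝ) := fun p => fderiv ℝ F p (1, 0) with hWdef
  have hV : ContDiff ℝ (⊤ : ℕ∞) V := (hF.fderiv_right (by simp)).clm_apply contDiff_const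
  have hW : ContDiff ℝ (⊤ : ℕ∞) W := (hF.fderiv_right (by simp)).clm_apply contDiff_const
  have hVd : Differentiable ℝ V := hV.differentiable (by simp)
  have hWd : Differentiable ℝ W := hW.differentiable (by simp)
  -- basic deriv identities
  have hderiv_τ : ∀ s τ, deriv (fun σ => x (γ₀ s) σ) τ = V (s, τ) := fun s τ =>
    (slice2 hFd s τ).deriv
  have hderiv_s : ∀ s τ k, deriv (fun σ => x (γ₀ σ) τ k) s = W (s, τ) k := fun s τ k =>
    ((hasDerivAt_pi.1 (slice1 hFd s τ)) k).deriv
  -- Clairaut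
  have clairaut : ∀ p : ℝ × ℝ,
      fderiv ℝ W p (0, 1) = fderiv ℝ V p (1, 0) := by
    intro p
    have hsymm : IsSymmSndFDerivAt ℝ F p :=
      hF.contDiffAt.isSymmSndFDerivAt
        (by rw [minSmoothness_of_isRCLikeNormedField]; exact WithTop.coe_le_coe.mpr (le_top : (2 : ℕ∞) ≤ ⊤))
    have hdF : DifferentiableAt ℝ (fderiv ℝ F) p :=
      ((hF.fderiv_right (m := (⊤ : ℕ∞)) (by simp)).differentiable (by simp)) p
    have h1 : fderiv ℝ W p = (fderiv ℝ (fderiv ℝ F) p).flip (1, 0) := by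
      rw [hWdef]
      have := fderiv_clm_apply (c := fderiv ℝ F) (u := fun _ => ((1:ℝ), (0:ℝ)))
        hdF (differentiableAt_const _)
      simpa using this
    have h2 : fderiv ℝ V p = (fderiv ℝ (fderiv ℝ F) p).flip (0, 1) := by
      rw [hVdef]
      have := fderiv_clm_apply (c := fderiv ℝ F) (u := fun _ => ((0:ℝ), (1:ℝ)))
        hdF (differentiableAt_const _)
      simpa using this
    rw [h1, h2]
    exact hsymm _ _
  -- the integrand as a smooth function of (s, τ)
  set g : ℝ × ℝ → ℝ := fun p => ∑ k, V p k * W p k with hgdef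
  have hg : ContDiff ℝ (⊤ : ℕ∞) g := by
    apply ContDiff.sum
    intro k _
    exact ((contDiff_pi.1 hV) k).mul ((contDiff_pi.1 hW) k)
  -- rewrite the circulation
  have hfun : (fun τ => ∫ s in (0:ℝ)..1,
      ∑ k, deriv (fun σ => x (γ₀ s) σ) τ k * deriv (fun σ => x (γ₀ σ) τ k) s)
      = fun τ => ∫ s in (0:ℝ)..1, g (s, τ) := by
    funext τ
    congr 1
    funext s
    rw [hgdef]
    congr 1
    funext k
    rw [hderiv_τ, hderiv_s]
  rw [hfun, (deriv_under_integral hg t).deriv]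
  -- compute the τ–derivative of g
  have hgderiv : ∀ s, fderiv ℝ g (s, t) (0, 1)
      = (∑ k, fderiv ℝ V (s, t) (0, 1) k * W (s, t) k)
        + ∑ k, V (s, t) k * fderiv ℝ V (s, t) (1, 0) k := by
    intro s
    have h1 : HasDerivAt (fun τ => g (s, τ))
        ((∑ k, fderiv ℝ V (s, t) (0, 1) k * W (s, t) k)
          + ∑ k, V (s, t) k * fderiv ℝ W (s, t) (0, 1) k) t := by
      have : HasDerivAt (fun τ => g (s, τ))
          (∑ k, (fderiv ℝ V (s, t) (0, 1) k * W (s, t) k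
            + V (s, t) k * fderiv ℝ W (s, t) (0, 1) k)) t := by
        apply HasDerivAt.fun_sum
        intro k _
        exact ((hasDerivAt_pi.1 (slice2 hVd s t)) k).mul
          ((hasDerivAt_pi.1 (slice2 hWd s t)) k)
      simpa [Finset.sum_add_distrib] using this
    rw [← (slice2 (hg.differentiable (by simp)) s t).deriv, h1.deriv, clairaut]
  -- the second piece is the s-derivative of |V|²/2
  have hH : ∀ s, HasDerivAt (fun σ => (∑ k, V (σ, t) k * V (σ, t) k) / 2)
      (∑ k, V (s, t) k * fderiv ℝ V (s, t) (1, 0) k) s := by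
    intro s
    have : HasDerivAt (fun σ => ∑ k, V (σ, t) k * V (σ, t) k)
        (∑ k, (fderiv ℝ V (s, t) (1, 0) k * V (s, t) k
          + V (s, t) k * fderiv ℝ V (s, t) (1, 0) k)) s := by
      apply HasDerivAt.fun_sum
      intro k _
      exact ((hasDerivAt_pi.1 (slice1 hVd s t)) k).mul
        ((hasDerivAt_pi.1 (slice1 hVd s t)) k)
    have h2 := this.div_const 2
    refine h2.congr_deriv (Eq.symm ?_)
    rw [Finset.sum_add_distrib]
    ring_nf
    rw [Finset.sum_congr rfl (fun k _ => mul_comm (fderiv ℝ V (s, t) (1, 0) k) (V (s, t) k))]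
    ring
  -- integrate
  have hcont1 : Continuous fun s => ∑ k, fderiv ℝ V (s, t) (0, 1) k * W (s, t) k := by
    apply continuous_finset_sum
    intro k _
    exact ((continuous_apply k).comp ((((hV.fderiv_right (m := (⊤ : ℕ∞)) (by simp)).continuous.clm_apply
        continuous_const).comp (continuous_id.prodMk continuous_const)))).mul
      ((continuous_apply k).comp ((hW.continuous).comp (continuous_id.prodMk continuous_const)))
  have hcont2 : Continuous fun s => ∑ k, V (s, t) k * fderiv ℝ V (s, t) (1, 0) k := by
    apply continuous_finset_sum
    intro k _
    exact ((continuous_apply k).comp ((hV.continuous).comp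
        (continuous_id.prodMk continuous_const))).mul
      ((continuous_apply k).comp ((((hV.fderiv_right (m := (⊤ : ℕ∞)) (by simp)).continuous.clm_apply
        continuous_const).comp (continuous_id.prodMk continuous_const))))
  have hsplit : (∫ s in (0:ℝ)..1, fderiv ℝ g (s, t) (0, 1))
      = (∫ s in (0:ℝ)..1, ∑ k, fderiv ℝ V (s, t) (0, 1) k * W (s, t) k)
        + ∫ s in (0:ℝ)..1, ∑ k, V (s, t) k * fderiv ℝ V (s, t) (1, 0) k := by
    rw [← intervalIntegral.integral_add (hcont1.intervalIntegrable 0 1)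
      (hcont2.intervalIntegrable 0 1)]
    exact intervalIntegral.integral_congr fun s _ => hgderiv s
  have hzero : (∫ s in (0:ℝ)..1, ∑ k, V (s, t) k * fderiv ℝ V (s, t) (1, 0) k) = 0 := by
    rw [intervalIntegral.integral_eq_sub_of_hasDerivAt (fun s _ => hH s)
      (hcont2.intervalIntegrable 0 1)]
    have hVclosed : V ((0:ℝ), t) = V ((1:ℝ), t) := by
      have e0 : (fun τ => F ((0:ℝ), τ)) = fun τ => F ((1:ℝ), τ) := by
        funext τ; simp [hFdef, hclosed]
      show fderiv ℝ F ((0:ℝ), t) (0, 1) = fderiv ℝ F ((1:ℝ), t) (0, 1)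
      rw [← (slice2 hFd 0 t).deriv, ← (slice2 hFd 1 t).deriv, e0]
    simp [hVclosed]
  rw [hsplit, hzero, add_zero]
  -- identify the remaining integrand with the acceleration term
  apply intervalIntegral.integral_congr
  intro s _
  apply Finset.sum_congr rfl
  intro k _
  rw [hderiv_s]
  congr 1
  have e : (fun τ => deriv (fun σ => x (γ₀ s) σ) τ) = fun τ => V (s, τ) := by
    funext τ; exact hderiv_τ s τ
  rw [e, (slice2 hVd s t).deriv]
end
end

section
/- If screen fields φ, ψ : ℝ³ × ℝ → ℝ are material invariants of a smooth velocity field u, i.e., ∂ₜφ + u·∇φ = 0 and ∂ₜψ + u·∇ψ = 0, then the vector field w(x,t) = ∇φ(x,t) × ∇ψ(x,t) satisfies the vorticity (Lie-advection) equation ∂ₜw + u·∇w − w·∇u + (∇·u) w = 0. -/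
noncomputable section

/-- Spatial gradient of a scalar field on `ℝ³`. -/
def grad (f : (Fin 3 → ℝ) → ℝ) (y : Fin 3 → ℝ) : Fin 3 → ℝ :=
  fun i => fderiv ℝ f y (Pi.single i 1)

open ContinuousLinearMap in

abbrev P3 := (Fin 3 → ℝ) × ℝ

def Dd (v : P3) (G : P3 → ℝ) : P3 → ℝ := fun p => fderiv ℝ G p v

lemma Dd_smooth {G : P3 → ℝ} (hG : ContDiff ℝ (⊤ : ℕ∞) G) (v : P3) :
    ContDiff ℝ (⊤ : ℕ∞) (Dd v G) := by
  have h1 : ContDiff ℝ (⊤ : ℕ∞) (fderiv ℝ G) := hG.fderiv_right (by simp)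
  exact (ContinuousLinearMap.apply ℝ ℝ v).contDiff.comp h1

lemma Dd_add {F G : P3 → ℝ} (hF : ContDiff ℝ (⊤ : ℕ∞) F) (hG : ContDiff ℝ (⊤ : ℕ∞) G) (v p) :
    Dd v (fun q => F q + G q) p = Dd v F p + Dd v G p := by
  simp [Dd, fderiv_fun_add (hF.differentiable (by simp) p)
    (hG.differentiable (by simp) p)]

lemma Dd_mul {F G : P3 → ℝ} (hF : ContDiff ℝ (⊤ : ℕ∞) F) (hG : ContDiff ℝ (⊤ : ℕ∞) G) (v p) :
    Dd v (fun q => F q * G q) p = Dd v F p * G p + F p * Dd v G p := by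
  simp [Dd, fderiv_fun_mul (hF.differentiable (by simp) p)
    (hG.differentiable (by simp) p)]
  ring

lemma Dd_sub {F G : P3 → ℝ} (hF : ContDiff ℝ (⊤ : ℕ∞) F) (hG : ContDiff ℝ (⊤ : ℕ∞) G) (v p) :
    Dd v (fun q => F q - G q) p = Dd v F p - Dd v G p := by
  simp [Dd, fderiv_fun_sub (hF.differentiable (by simp) p)
    (hG.differentiable (by simp) p)]

lemma Dd_sum {F : Fin 3 → P3 → ℝ} (hF : ∀ j, ContDiff ℝ (⊤ : ℕ∞) (F j)) (v p) :
    Dd v (fun q => ∑ j, F j q) p = ∑ j, Dd v (F j) p := by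
  simp [Dd, fderiv_fun_sum (fun j _ => ((hF j).differentiable (by simp) p))]

lemma Dd_comm {G : P3 → ℝ} (hG : ContDiff ℝ (⊤ : ℕ∞) G) (v w p) :
    Dd v (Dd w G) p = Dd w (Dd v G) p := by
  have hd : Differentiable ℝ (fderiv ℝ G) :=
    (hG.fderiv_right (m := (⊤ : ℕ∞)) (by simp)).differentiable (by simp)
  have hx : HasFDerivAt (fderiv ℝ G) (fderiv ℝ (fderiv ℝ G) p) p := (hd p).hasFDerivAt
  have hsym := second_derivative_symmetric
    (fun y => ((hG.differentiable (by simp)) y).hasFDerivAt) hx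
  have key : ∀ a b : P3, Dd a (Dd b G) p = fderiv ℝ (fderiv ℝ G) p a b := by
    intro a b
    have h2 : HasFDerivAt (fun q => (ContinuousLinearMap.apply ℝ ℝ b) (fderiv ℝ G q))
        ((ContinuousLinearMap.apply ℝ ℝ b).comp (fderiv ℝ (fderiv ℝ G) p)) p :=
      (ContinuousLinearMap.apply ℝ ℝ b).hasFDerivAt.comp p hx
    have : Dd b G = fun q => (ContinuousLinearMap.apply ℝ ℝ b) (fderiv ℝ G q) := rfl
    rw [Dd, this, h2.fderiv]
    rfl
  rw [key v w, key w v, hsym]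

lemma deriv_curry {F : P3 → ℝ} (hF : ContDiff ℝ (⊤ : ℕ∞) F) (y t) :
    deriv (fun τ => F (y, τ)) t = Dd (0, 1) F (y, t) := by
  have h1 : HasFDerivAt (fun τ : ℝ => (y, τ)) (ContinuousLinearMap.inr ℝ (Fin 3 → ℝ) ℝ) t :=
    HasFDerivAt.prodMk (hasFDerivAt_const y t) (hasFDerivAt_id t)
  have h2 := ((hF.differentiable (by simp) (y, t)).hasFDerivAt).comp t h1
  have h3 := h2.hasDerivAt.deriv
  exact h3

lemma fderiv_curry {F : P3 → ℝ} (hF : ContDiff ℝ (⊤ : ℕ∞) F) (y t v) :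
    fderiv ℝ (fun z => F (z, t)) y v = Dd (v, 0) F (y, t) := by
  have h1 : HasFDerivAt (fun z : Fin 3 → ℝ => (z, t))
      (ContinuousLinearMap.inl ℝ (Fin 3 → ℝ) ℝ) y :=
    HasFDerivAt.prodMk (hasFDerivAt_id y) (hasFDerivAt_const t y)
  have h2 := ((hF.differentiable (by simp) (y, t)).hasFDerivAt).comp y h1
  rw [show (fun z => F (z, t)) = F ∘ (fun z : Fin 3 → ℝ => (z, t)) from rfl, h2.fderiv]
  rfl

lemma evol (U : Fin 3 → P3 → ℝ) (hU : ∀ j, ContDiff ℝ (⊤ : ℕ∞) (U j))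
    (Φ : P3 → ℝ) (hΦ : ContDiff ℝ (⊤ : ℕ∞) Φ)
    (h : ∀ p, Dd (0,1) Φ p + ∑ j, U j p * Dd (Pi.single j 1, 0) Φ p = 0)
    (i : Fin 3) (p : P3) :
    Dd (0,1) (Dd (Pi.single i 1, 0) Φ) p
      + ∑ j, (Dd (Pi.single i 1, 0) (U j) p * Dd (Pi.single j 1, 0) Φ p
          + U j p * Dd (Pi.single j 1, 0) (Dd (Pi.single i 1, 0) Φ) p) = 0 := by
  set v : P3 := (Pi.single i 1, 0) with hv
  have hG0 : (fun p => Dd (0,1) Φ p + ∑ j, U j p * Dd (Pi.single j 1, 0) Φ p)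
      = fun _ => (0:ℝ) := funext h
  have hDt : ContDiff ℝ (⊤ : ℕ∞) (Dd ((0:Fin 3 → ℝ),(1:ℝ)) Φ) := Dd_smooth hΦ _
  have hAj : ∀ j : Fin 3, ContDiff ℝ (⊤ : ℕ∞) (Dd (Pi.single j 1, 0) Φ) := fun j => Dd_smooth hΦ _
  have hprod : ∀ j : Fin 3, ContDiff ℝ (⊤ : ℕ∞) (fun q => U j q * Dd (Pi.single j 1, 0) Φ q) :=
    fun j => (hU j).mul (hAj j)
  have hsum : ContDiff ℝ (⊤ : ℕ∞) (fun q => ∑ j, U j q * Dd (Pi.single j 1, 0) Φ q) :=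
    ContDiff.sum fun j _ => hprod j
  have hzero : Dd v (fun p => Dd (0,1) Φ p + ∑ j, U j p * Dd (Pi.single j 1, 0) Φ p) p = 0 := by
    rw [hG0]; simp [Dd]
  rw [Dd_add hDt hsum, Dd_sum (fun j => hprod j)] at hzero
  have : ∀ j : Fin 3, Dd v (fun q => U j q * Dd (Pi.single j 1, 0) Φ q) p
      = Dd v (U j) p * Dd (Pi.single j 1, 0) Φ p + U j p * Dd v (Dd (Pi.single j 1, 0) Φ) p :=
    fun j => Dd_mul (hU j) (hAj j) v p
  simp only [this] at hzero
  have hcomm1 : Dd v (Dd ((0:Fin 3 → ℝ),(1:ℝ)) Φ) p = Dd (0,1) (Dd v Φ) p := Dd_comm hΦ v _ p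
  have hcomm2 : ∀ j : Fin 3, Dd v (Dd (Pi.single j 1, 0) Φ) p
      = Dd (Pi.single j 1, 0) (Dd v Φ) p := fun j => Dd_comm hΦ v _ p
  rw [hcomm1] at hzero
  simp only [hcomm2] at hzero
  exact hzero

/-- if `φ, ψ` are material invariants of `u`, then
`w = ∇φ × ∇ψ` satisfies the vorticity (Lie-advection) equation
`∂ₜw + u·∇w − w·∇u + (∇·u) w = 0`. -/
theorem clebsch_gradients_cross_product_is_lie_advected
    (u : (Fin 3 → ℝ) → ℝ → (Fin 3 → ℝ))
    (φ ψ : (Fin 3 → ℝ) → ℝ → ℝ)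
    (hu : ContDiff ℝ (⊤ : ℕ∞) (Function.uncurry u))
    (hφ : ContDiff ℝ (⊤ : ℕ∞) (Function.uncurry φ))
    (hψ : ContDiff ℝ (⊤ : ℕ∞) (Function.uncurry ψ))
    (hφt : ∀ y t, deriv (fun τ => φ y τ) t
        + ∑ j, u y t j * grad (fun z => φ z t) y j = 0)
    (hψt : ∀ y t, deriv (fun τ => ψ y τ) t
        + ∑ j, u y t j * grad (fun z => ψ z t) y j = 0)
    (w : (Fin 3 → ℝ) → ℝ → (Fin 3 → ℝ))
    (hw : ∀ y t, w y t = crossProduct (grad (fun z => φ z t) y) (grad (fun z => ψ z t) y)) :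
    ∀ (y : Fin 3 → ℝ) (t : ℝ) (i : Fin 3),
      deriv (fun τ => w y τ i) t
        + ∑ j, u y t j * fderiv ℝ (fun z => w z t i) y (Pi.single j 1)
        - ∑ j, w y t j * fderiv ℝ (fun z => u z t i) y (Pi.single j 1)
        + (∑ j, fderiv ℝ (fun z => u z t j) y (Pi.single j 1)) * w y t i
      = 0 := by
  -- setup
  set Φ : P3 → ℝ := Function.uncurry φ with hΦdef
  set Ψ : P3 → ℝ := Function.uncurry ψ with hΨdef
  set U : Fin 3 → P3 → ℝ := fun j p => Function.uncurry u p j with hUdef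
  have hUs : ∀ j, ContDiff ℝ (⊤ : ℕ∞) (U j) := fun j => contDiff_pi.mp hu j
  set A : Fin 3 → P3 → ℝ := fun j => Dd (Pi.single j 1, 0) Φ with hAdef
  set B : Fin 3 → P3 → ℝ := fun j => Dd (Pi.single j 1, 0) Ψ with hBdef
  have hAs : ∀ j, ContDiff ℝ (⊤ : ℕ∞) (A j) := fun j => Dd_smooth hφ _
  have hBs : ∀ j, ContDiff ℝ (⊤ : ℕ∞) (B j) := fun j => Dd_smooth hψ _
  have hgrφ : ∀ (y : Fin 3 → ℝ) (t : ℝ) (j : Fin 3),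
      grad (fun z => φ z t) y j = A j (y, t) := fun y t j => fderiv_curry hφ y t _
  have hgrψ : ∀ (y : Fin 3 → ℝ) (t : ℝ) (j : Fin 3),
      grad (fun z => ψ z t) y j = B j (y, t) := fun y t j => fderiv_curry hψ y t _
  -- material invariance, uncurried
  have Hφ : ∀ p : P3, Dd (0,1) Φ p + ∑ j, U j p * Dd (Pi.single j 1, 0) Φ p = 0 := by
    rintro ⟨y, t⟩
    have h := hφt y t
    rw [show deriv (fun τ => φ y τ) t = Dd (0,1) Φ (y,t) from deriv_curry hφ y t] at h
    simp only [hgrφ] at h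
    exact h
  have Hψ : ∀ p : P3, Dd (0,1) Ψ p + ∑ j, U j p * Dd (Pi.single j 1, 0) Ψ p = 0 := by
    rintro ⟨y, t⟩
    have h := hψt y t
    rw [show deriv (fun τ => ψ y τ) t = Dd (0,1) Ψ (y,t) from deriv_curry hψ y t] at h
    simp only [hgrψ] at h
    exact h
  -- W components
  set W : Fin 3 → P3 → ℝ :=
    fun k p => A (k+1) p * B (k+2) p - A (k+2) p * B (k+1) p with hWdef
  have hWs : ∀ k, ContDiff ℝ (⊤ : ℕ∞) (W k) :=
    fun k => ((hAs _).mul (hBs _)).sub ((hAs _).mul (hBs _))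
  have hwW : ∀ (y : Fin 3 → ℝ) (t : ℝ) (k : Fin 3), w y t k = W k (y, t) := by
    intro y t k
    rw [hw, cross_apply]
    fin_cases k <;>
      simp [hWdef, hgrφ, hgrψ]
  intro y t i
  have e3 : ∀ (k j : Fin 3), fderiv ℝ (fun z => u z t k) y (Pi.single j 1)
      = Dd (Pi.single j 1, 0) (U k) (y,t) := fun k j => fderiv_curry (hUs k) y t _
  have e4 : ∀ j : Fin 3, u y t j = U j (y,t) := fun _ => rfl
  have e1 : deriv (fun τ => W i (y, τ)) t = Dd (0,1) (W i) (y,t) := deriv_curry (hWs i) y t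
  have e2 : ∀ j : Fin 3, fderiv ℝ (fun z => W i (z, t)) y (Pi.single j 1)
      = Dd (Pi.single j 1, 0) (W i) (y,t) := fun j => fderiv_curry (hWs i) y t _
  simp only [hwW, e1, e2, e3, e4]
  set p : P3 := (y, t) with hp
  -- expand derivatives of W
  have expand : ∀ (k : Fin 3) (v : P3), Dd v (W k) p
      = Dd v (A (k+1)) p * B (k+2) p + A (k+1) p * Dd v (B (k+2)) p
        - (Dd v (A (k+2)) p * B (k+1) p + A (k+2) p * Dd v (B (k+1)) p) := by
    intro k v
    rw [hWdef]
    rw [Dd_sub ((hAs _).mul (hBs _)) ((hAs _).mul (hBs _)) v p,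
      Dd_mul (hAs _) (hBs _) v p, Dd_mul (hAs _) (hBs _) v p]
  -- evolution of gradient components
  have EA : ∀ k : Fin 3, Dd (0,1) (A k) p
      = -∑ j, (Dd (Pi.single k 1, 0) (U j) p * A j p
          + U j p * Dd (Pi.single j 1, 0) (A k) p) := by
    intro k
    have h := evol U hUs Φ hφ Hφ k p
    rw [hAdef]
    linarith [h]
  have EB : ∀ k : Fin 3, Dd (0,1) (B k) p
      = -∑ j, (Dd (Pi.single k 1, 0) (U j) p * B j p
          + U j p * Dd (Pi.single j 1, 0) (B k) p) := by
    intro k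
    have h := evol U hUs Ψ hψ Hψ k p
    rw [hBdef]
    linarith [h]
  simp only [expand, EA, EB]
  simp only [hWdef]
  fin_cases i <;>
    · simp only [Fin.isValue, Fin.sum_univ_three, Fin.mk_zero, Fin.mk_one,
        show (⟨2, by norm_num⟩ : Fin 3) = 2 from rfl, Fin.reduceAdd,
        show (0:Fin 3)+1 = 1 from rfl, show (0:Fin 3)+2 = 2 from rfl,
        show (1:Fin 3)+1 = 2 from rfl, show (1:Fin 3)+2 = 0 from rfl,
        show (2:Fin 3)+1 = 0 from rfl, show (2:Fin 3)+2 = 1 from rfl,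
        show (1:Fin 3)+0 = 1 from rfl, show (2:Fin 3)+0 = 2 from rfl]
      ring
end
end

section
/- Clebsch representation solves Euler: Suppose φ, ψ, F : ℝ³ × ℝ → ℝ are smooth, φ and ψ satisfy ∂ₜφ + u·∇φ = 0 and ∂ₜψ + u·∇ψ = 0 where u := ∇F + φ∇ψ. Then u satisfies ∂ₜu + u·∇u = ∇Ω with Ω := ∂ₜF + φ∂ₜψ + |u|²/2; i.e., the material acceleration of u is a gradient. -/
noncomputable section

namespace ClebschAux

abbrev E3 := Fin 3 → ℝ

variable {f : E3 → ℝ → ℝ}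

lemma diff_unc (hf : ContDiff ℝ (⊤ : ℕ∞) (Function.uncurry f)) :
    Differentiable ℝ (Function.uncurry f) := hf.differentiable (by simp)

lemma diff_fderiv (hf : ContDiff ℝ (⊤ : ℕ∞) (Function.uncurry f)) :
    Differentiable ℝ (fderiv ℝ (Function.uncurry f)) :=
  (hf.fderiv_right (m := (⊤ : ℕ∞)) (by simp)).differentiable (by simp)

lemma hasF_slice (hf : ContDiff ℝ (⊤ : ℕ∞) (Function.uncurry f)) (y : E3) (t : ℝ) :
    HasFDerivAt (fun z => f z t)
      ((fderiv ℝ (Function.uncurry f) (y, t)).comp (ContinuousLinearMap.inl ℝ E3 ℝ)) y :=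
  by have := ((diff_unc hf (y, t)).hasFDerivAt).comp y (hasFDerivAt_prodMk_left (𝕜 := ℝ) y t); exact this

lemma slice_fderiv_apply (hf : ContDiff ℝ (⊤ : ℕ∞) (Function.uncurry f)) (y : E3) (t : ℝ) (v : E3) :
    fderiv ℝ (fun z => f z t) y v = fderiv ℝ (Function.uncurry f) (y, t) (v, 0) := by
  rw [(hasF_slice hf y t).fderiv]; simp

lemma hasD_time (hf : ContDiff ℝ (⊤ : ℕ∞) (Function.uncurry f)) (y : E3) (t : ℝ) :
    HasDerivAt (fun τ => f y τ) (fderiv ℝ (Function.uncurry f) (y, t) (0, 1)) t :=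
  ((diff_unc hf (y, t)).hasFDerivAt).comp_hasDerivAt t
    (HasDerivAt.prodMk (hasDerivAt_const t y) (hasDerivAt_id t))

lemma hasF_slice_fderiv (hf : ContDiff ℝ (⊤ : ℕ∞) (Function.uncurry f)) (y : E3) (t : ℝ) (w : E3 × ℝ) :
    HasFDerivAt (fun z => fderiv ℝ (Function.uncurry f) (z, t) w)
      ((ContinuousLinearMap.apply ℝ ℝ w).comp
        ((fderiv ℝ (fderiv ℝ (Function.uncurry f)) (y, t)).comp (ContinuousLinearMap.inl ℝ E3 ℝ))) y := by
  have h1 : HasFDerivAt (fun z => fderiv ℝ (Function.uncurry f) (z, t))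
      ((fderiv ℝ (fderiv ℝ (Function.uncurry f)) (y, t)).comp (ContinuousLinearMap.inl ℝ E3 ℝ)) y :=
    ((diff_fderiv hf (y, t)).hasFDerivAt).comp y (hasFDerivAt_prodMk_left y t)
  exact ((ContinuousLinearMap.apply ℝ ℝ w).hasFDerivAt).comp y h1

lemma hasD_time_fderiv (hf : ContDiff ℝ (⊤ : ℕ∞) (Function.uncurry f)) (y : E3) (t : ℝ) (w : E3 × ℝ) :
    HasDerivAt (fun τ => fderiv ℝ (Function.uncurry f) (y, τ) w)
      (fderiv ℝ (fderiv ℝ (Function.uncurry f)) (y, t) (0, 1) w) t := by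
  have h1 : HasDerivAt (fun τ => fderiv ℝ (Function.uncurry f) (y, τ))
      (fderiv ℝ (fderiv ℝ (Function.uncurry f)) (y, t) (0, 1)) t :=
    ((diff_fderiv hf (y, t)).hasFDerivAt).comp_hasDerivAt t
      (HasDerivAt.prodMk (hasDerivAt_const t y) (hasDerivAt_id t))
  simpa using h1.clm_apply (hasDerivAt_const t w)

lemma symm2 (hf : ContDiff ℝ (⊤ : ℕ∞) (Function.uncurry f)) (y : E3) (t : ℝ) (v w : E3 × ℝ) :
    fderiv ℝ (fderiv ℝ (Function.uncurry f)) (y, t) v w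
      = fderiv ℝ (fderiv ℝ (Function.uncurry f)) (y, t) w v :=
  (hf.contDiffAt.isSymmSndFDerivAt (by rw [minSmoothness_of_isRCLikeNormedField]; exact WithTop.coe_le_coe.mpr le_top)) v w

end ClebschAux

open ClebschAux in
/-- the Clebsch representation `u = ∇F + φ∇ψ`, with `φ, ψ`
material invariants, makes the material acceleration a gradient:
`∂ₜu + u·∇u = ∇Ω` with `Ω = ∂ₜF + φ∂ₜψ + |u|²/2`. -/
theorem clebsch_representation_solves_euler
    (u : (Fin 3 → ℝ) → ℝ → (Fin 3 → ℝ))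
    (φ ψ F : (Fin 3 → ℝ) → ℝ → ℝ)
    (hφ : ContDiff ℝ (⊤ : ℕ∞) (Function.uncurry φ))
    (hψ : ContDiff ℝ (⊤ : ℕ∞) (Function.uncurry ψ))
    (hF : ContDiff ℝ (⊤ : ℕ∞) (Function.uncurry F))
    (hu_def : ∀ y t,
      u y t = grad (fun z => F z t) y + φ y t • grad (fun z => ψ z t) y)
    (hφt : ∀ y t, deriv (fun τ => φ y τ) t
        + ∑ j, u y t j * grad (fun z => φ z t) y j = 0)
    (hψt : ∀ y t, deriv (fun τ => ψ y τ) t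
        + ∑ j, u y t j * grad (fun z => ψ z t) y j = 0) :
    ∀ (y : Fin 3 → ℝ) (t : ℝ) (i : Fin 3),
      deriv (fun τ => u y τ i) t
        + ∑ j, u y t j * fderiv ℝ (fun z => u z t i) y (Pi.single j 1)
      = grad (fun z =>
          deriv (fun τ => F z τ) t + φ z t * deriv (fun τ => ψ z τ) t
            + (∑ k, u z t k ^ 2) / 2) y i := by
  intro y t i
  -- notation
  set DF := fderiv ℝ (Function.uncurry F) with hDF
  set Dφ := fderiv ℝ (Function.uncurry φ) with hDφ
  set Dψ := fderiv ℝ (Function.uncurry ψ) with hDψ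
  set AF := fderiv ℝ (fderiv ℝ (Function.uncurry F)) (y, t) with hAF
  set Aψ := fderiv ℝ (fderiv ℝ (Function.uncurry ψ)) (y, t) with hAψ
  have hU : ∀ (z : Fin 3 → ℝ) (τ : ℝ) (k : Fin 3),
      u z τ k = DF (z, τ) (Pi.single k 1, 0) + φ z τ * Dψ (z, τ) (Pi.single k 1, 0) := by
    intro z τ k
    rw [hu_def]
    simp [grad, slice_fderiv_apply hF, slice_fderiv_apply hψ, hDF, hDψ]
  -- time derivative of u _ _ i
  have h1 : deriv (fun τ => u y τ i) t
      = AF (0, 1) (Pi.single i 1, 0)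
        + (Dφ (y, t) (0, 1) * Dψ (y, t) (Pi.single i 1, 0)
           + φ y t * Aψ (0, 1) (Pi.single i 1, 0)) := by
    have he : (fun τ => u y τ i) = fun τ =>
        DF (y, τ) (Pi.single i 1, 0) + φ y τ * Dψ (y, τ) (Pi.single i 1, 0) := by
      funext τ; exact hU y τ i
    rw [he]
    exact ((hasD_time_fderiv hF y t _).add
      ((hasD_time hφ y t).mul (hasD_time_fderiv hψ y t _))).deriv
  -- spatial derivatives of u _ _ i
  have h2 : ∀ j : Fin 3, fderiv ℝ (fun z => u z t i) y (Pi.single j 1)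
      = AF (Pi.single j 1, 0) (Pi.single i 1, 0)
        + (φ y t * Aψ (Pi.single j 1, 0) (Pi.single i 1, 0)
           + Dψ (y, t) (Pi.single i 1, 0) * Dφ (y, t) (Pi.single j 1, 0)) := by
    intro j
    have he : (fun z => u z t i) = fun z =>
        DF (z, t) (Pi.single i 1, 0) + φ z t * Dψ (z, t) (Pi.single i 1, 0) := by
      funext z; exact hU z t i
    rw [he, ((hasF_slice_fderiv hF y t _).fun_add
      ((hasF_slice hφ y t).fun_mul (hasF_slice_fderiv hψ y t _))).fderiv]
    simp [hAF, hAψ, hDφ]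
    exact Or.inl rfl
  -- gradient of the Bernoulli-type function
  have h3 : grad (fun z =>
        deriv (fun τ => F z τ) t + φ z t * deriv (fun τ => ψ z τ) t
          + (∑ k, u z t k ^ 2) / 2) y i
      = AF (Pi.single i 1, 0) (0, 1)
        + (φ y t * Aψ (Pi.single i 1, 0) (0, 1)
           + Dψ (y, t) (0, 1) * Dφ (y, t) (Pi.single i 1, 0))
        + (∑ k : Fin 3, 2 * (u y t k) *
            (AF (Pi.single i 1, 0) (Pi.single k 1, 0)
              + (φ y t * Aψ (Pi.single i 1, 0) (Pi.single k 1, 0)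
                 + Dψ (y, t) (Pi.single k 1, 0) * Dφ (y, t) (Pi.single i 1, 0)))) / 2 := by
    have he : (fun z =>
        deriv (fun τ => F z τ) t + φ z t * deriv (fun τ => ψ z τ) t
          + (∑ k, u z t k ^ 2) / 2)
        = fun z => DF (z, t) (0, 1) + φ z t * Dψ (z, t) (0, 1)
          + (2⁻¹ : ℝ) * ∑ k : Fin 3, (DF (z, t) (Pi.single k 1, 0)
              + φ z t * Dψ (z, t) (Pi.single k 1, 0)) *
             (DF (z, t) (Pi.single k 1, 0)
              + φ z t * Dψ (z, t) (Pi.single k 1, 0)) := by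
      funext z
      rw [(hasD_time hF z t).deriv, (hasD_time hψ z t).deriv]
      have : (∑ k : Fin 3, u z t k ^ 2)
          = ∑ k : Fin 3, (DF (z, t) (Pi.single k 1, 0)
              + φ z t * Dψ (z, t) (Pi.single k 1, 0)) *
             (DF (z, t) (Pi.single k 1, 0)
              + φ z t * Dψ (z, t) (Pi.single k 1, 0)) :=
        Finset.sum_congr rfl fun k _ => by rw [hU z t k]; ring
      rw [this]; ring
    have hder : HasFDerivAt (fun z => DF (z, t) (0, 1) + φ z t * Dψ (z, t) (0, 1)
          + (2⁻¹ : ℝ) * ∑ k : Fin 3, (DF (z, t) (Pi.single k 1, 0)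
              + φ z t * Dψ (z, t) (Pi.single k 1, 0)) *
             (DF (z, t) (Pi.single k 1, 0)
              + φ z t * Dψ (z, t) (Pi.single k 1, 0))) _ y :=
      (((hasF_slice_fderiv hF y t (0, 1)).fun_add
        ((hasF_slice hφ y t).fun_mul (hasF_slice_fderiv hψ y t (0, 1)))).fun_add
        ((HasFDerivAt.fun_sum (fun k _ =>
          ((hasF_slice_fderiv hF y t (Pi.single k 1, 0)).fun_add
            ((hasF_slice hφ y t).fun_mul
              (hasF_slice_fderiv hψ y t (Pi.single k 1, 0)))).fun_mul
          ((hasF_slice_fderiv hF y t (Pi.single k 1, 0)).fun_add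
            ((hasF_slice hφ y t).fun_mul
              (hasF_slice_fderiv hψ y t (Pi.single k 1, 0)))))).const_mul (2⁻¹ : ℝ)))
    rw [grad, he, hder.fderiv]
    simp [hAF, hAψ, hDφ, hU y t]
    simp only [← hAF, ← hAψ]
    simp only [← hDF, ← hDψ, ← hDφ]
    rw [Finset.mul_sum, Finset.sum_div]
    exact congrArg _ (Finset.sum_congr rfl fun k _ => by ring)
  -- rewrite the material-invariance hypotheses
  have hφt' : Dφ (y, t) (0, 1)
      + ∑ j : Fin 3, u y t j * Dφ (y, t) (Pi.single j 1, 0) = 0 := by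
    have h := hφt y t
    rw [(hasD_time hφ y t).deriv] at h
    simpa only [grad, slice_fderiv_apply hφ] using h
  have hψt' : Dψ (y, t) (0, 1)
      + ∑ j : Fin 3, u y t j * Dψ (y, t) (Pi.single j 1, 0) = 0 := by
    have h := hψt y t
    rw [(hasD_time hψ y t).deriv] at h
    simpa only [grad, slice_fderiv_apply hψ] using h
  rw [h1, h3, Finset.sum_congr rfl fun j _ => by rw [h2 j]]
  rw [symm2 hF y t (0, 1) (Pi.single i 1, 0), symm2 hψ y t (0, 1) (Pi.single i 1, 0)]
  rw [Fin.sum_univ_three, Fin.sum_univ_three] at *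
  rw [symm2 hF y t (Pi.single 0 1, 0) (Pi.single i 1, 0),
      symm2 hF y t (Pi.single 1 1, 0) (Pi.single i 1, 0),
      symm2 hF y t (Pi.single 2 1, 0) (Pi.single i 1, 0),
      symm2 hψ y t (Pi.single 0 1, 0) (Pi.single i 1, 0),
      symm2 hψ y t (Pi.single 1 1, 0) (Pi.single i 1, 0),
      symm2 hψ y t (Pi.single 2 1, 0) (Pi.single i 1, 0)]
  linear_combination Dψ (y, t) (Pi.single i 1, 0) * hφt'
    - Dφ (y, t) (Pi.single i 1, 0) * hψt'
end
end

section
/- Helmholtz flux conservation (via pullback of a 2-form): let Φ : [0,1]² → ℝ³ be a smooth parametrized surface of labels and Φ_t(s₁,s₂) = x(Φ(s₁,s₂),t) its image under a volume-preserving flow x satisfying the Cauchy vorticity formula ω(x(a,t),t) = Dₐx(a,t) · ω₀(a). Then the flux of ω(·,t) through Φ_t equals the flux of ω₀ through Φ: ∫ ω(Φ_t, t) · (∂_{s₁}Φ_t × ∂_{s₂}Φ_t) ds₁ds₂ = ∫ ω₀(Φ) · (∂_{s₁}Φ × ∂_{s₂}Φ) ds₁ds₂. -/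
noncomputable section

open Matrix

lemma triple_mulVec (M : Matrix (Fin 3) (Fin 3) ℝ) (u v w : Fin 3 → ℝ) :
    (M.mulVec u) ⬝ᵥ crossProduct (M.mulVec v) (M.mulVec w)
      = M.det * (u ⬝ᵥ crossProduct v w) := by
  rw [triple_product_eq_det, triple_product_eq_det]
  have : (![M.mulVec u, M.mulVec v, M.mulVec w] : Matrix (Fin 3) (Fin 3) ℝ)
      = (Matrix.of ![u, v, w]) * Mᵀ := by
    ext i j
    fin_cases i <;>
      simp [Matrix.mul_apply, Matrix.mulVec, dotProduct, mul_comm]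
  rw [this, Matrix.det_mul, Matrix.det_transpose, mul_comm]; rfl

lemma deriv_comp_mulVec (f : (Fin 3 → ℝ) → (Fin 3 → ℝ)) (g : ℝ → Fin 3 → ℝ)
    (s : ℝ) (hf : DifferentiableAt ℝ f (g s)) (hg : DifferentiableAt ℝ g s) :
    deriv (fun σ => f (g σ)) s =
      (Matrix.of fun i j => fderiv ℝ (fun b => f b i) (g s) (Pi.single j 1)).mulVec
        (deriv g s) := by
  have h1 : HasDerivAt (fun σ => f (g σ)) (fderiv ℝ f (g s) (deriv g s)) s :=
    hf.hasFDerivAt.comp_hasDerivAt s hg.hasDerivAt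
  rw [h1.deriv]
  set L := fderiv ℝ f (g s) with hL
  set v := deriv g s with hv
  have hcomp : ∀ i : Fin 3, fderiv ℝ (fun b => f b i) (g s)
      = (ContinuousLinearMap.proj i : ((Fin 3) → ℝ) →L[ℝ] ℝ).comp L := fun i =>
    ((ContinuousLinearMap.proj i : ((Fin 3) → ℝ) →L[ℝ] ℝ).hasFDerivAt.comp (g s)
      hf.hasFDerivAt).fderiv
  funext i
  have hvsum : v = ∑ j, v j • (Pi.single j 1 : Fin 3 → ℝ) := by
    funext k
    simp [Finset.sum_apply, Pi.single_apply, eq_comm]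
  calc L v i = L (∑ j, v j • (Pi.single j 1 : Fin 3 → ℝ)) i := by rw [← hvsum]
    _ = ∑ j, v j * L (Pi.single j 1) i := by
        rw [map_sum]
        simp [Finset.sum_apply]
    _ = (Matrix.of fun i j => fderiv ℝ (fun b => f b i) (g s)
          (Pi.single j 1)).mulVec v i := by
        simp only [Matrix.mulVec, dotProduct, Matrix.of_apply, hcomp]
        simp [mul_comm]


/-- Helmholtz flux conservation: under a volume-preserving flow
transporting vorticity by the Jacobian matrix (Cauchy vorticity formula), the
flux of vorticity through a transported surface is conserved. -/
theorem helmholtz_flux_conservation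
    (x : (Fin 3 → ℝ) → ℝ → (Fin 3 → ℝ))
    (ω : (Fin 3 → ℝ) → ℝ → (Fin 3 → ℝ))
    (ω₀' : (Fin 3 → ℝ) → (Fin 3 → ℝ))
    (Φ : ℝ → ℝ → (Fin 3 → ℝ))
    (hx : ContDiff ℝ (⊤ : ℕ∞) (Function.uncurry x))
    (hω : ContDiff ℝ (⊤ : ℕ∞) (Function.uncurry ω))
    (hω₀ : ContDiff ℝ (⊤ : ℕ∞) ω₀')
    (hΦ : ContDiff ℝ (⊤ : ℕ∞) (Function.uncurry Φ))
    (hinit : ∀ a, x a 0 = a)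
    (hvol : ∀ a t,
      (Matrix.of fun i j =>
        fderiv ℝ (fun b => x b t i) a (Pi.single j 1)).det = 1)
    (hcauchy : ∀ a t,
      ω (x a t) t
        = (Matrix.of fun i j =>
            fderiv ℝ (fun b => x b t i) a (Pi.single j 1)).mulVec (ω₀' a)) :
    ∀ t : ℝ,
      (∫ s₁ in (0:ℝ)..1, ∫ s₂ in (0:ℝ)..1,
        ∑ i, ω (x (Φ s₁ s₂) t) t i *
          crossProduct (deriv (fun σ => x (Φ σ s₂) t) s₁)
            (deriv (fun σ => x (Φ s₁ σ) t) s₂) i)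
      = ∫ s₁ in (0:ℝ)..1, ∫ s₂ in (0:ℝ)..1,
          ∑ i, ω₀' (Φ s₁ s₂) i *
            crossProduct (deriv (fun σ => Φ σ s₂) s₁)
              (deriv (fun σ => Φ s₁ σ) s₂) i := by
  intro t
  have hxt : Differentiable ℝ (fun b => x b t) := fun b => by
    have := (hx.differentiable (by simp) (b, t)).comp b
      (differentiableAt_id.prodMk (differentiableAt_const t) :
        DifferentiableAt ℝ (fun b : Fin 3 → ℝ => (b, t)) b)
    exact this
  have hΦd : Differentiable ℝ (Function.uncurry Φ) := hΦ.differentiable (by simp)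
  have key : ∀ s₁ s₂ : ℝ,
      (∑ i, ω (x (Φ s₁ s₂) t) t i *
          crossProduct (deriv (fun σ => x (Φ σ s₂) t) s₁)
            (deriv (fun σ => x (Φ s₁ σ) t) s₂) i)
      = ∑ i, ω₀' (Φ s₁ s₂) i *
          crossProduct (deriv (fun σ => Φ σ s₂) s₁)
            (deriv (fun σ => Φ s₁ σ) s₂) i := by
    intro s₁ s₂
    set a := Φ s₁ s₂ with ha
    set M := (Matrix.of fun i j =>
      fderiv ℝ (fun b => x b t i) a (Pi.single j 1)) with hM
    have hg₁ : DifferentiableAt ℝ (fun σ => Φ σ s₂) s₁ := by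
      have := (hΦd (s₁, s₂)).comp s₁ ((differentiableAt_id.prodMk (differentiableAt_const s₂) :
        DifferentiableAt ℝ (fun σ : ℝ => (σ, s₂)) s₁))
      exact this
    have hg₂ : DifferentiableAt ℝ (fun σ => Φ s₁ σ) s₂ := by
      have := (hΦd (s₁, s₂)).comp s₂ ((differentiableAt_const s₁).prodMk differentiableAt_id :
        DifferentiableAt ℝ (fun σ : ℝ => (s₁, σ)) s₂)
      exact this
    have hd₁ : deriv (fun σ => x (Φ σ s₂) t) s₁ = M.mulVec (deriv (fun σ => Φ σ s₂) s₁) :=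
      deriv_comp_mulVec (fun b => x b t) (fun σ => Φ σ s₂) s₁ (hxt a) hg₁
    have hd₂ : deriv (fun σ => x (Φ s₁ σ) t) s₂ = M.mulVec (deriv (fun σ => Φ s₁ σ) s₂) :=
      deriv_comp_mulVec (fun b => x b t) (fun σ => Φ s₁ σ) s₂ (hxt a) hg₂
    have hdet : M.det = 1 := hvol a t
    have hω' : ω (x a t) t = M.mulVec (ω₀' a) := hcauchy a t
    show (ω (x a t) t) ⬝ᵥ crossProduct (deriv (fun σ => x (Φ σ s₂) t) s₁)
        (deriv (fun σ => x (Φ s₁ σ) t) s₂)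
      = (ω₀' a) ⬝ᵥ crossProduct (deriv (fun σ => Φ σ s₂) s₁) (deriv (fun σ => Φ s₁ σ) s₂)
    rw [hd₁, hd₂, hω', triple_mulVec, hdet, one_mul]
  simp only [key]
end
end
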